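/- arXiv:2201.10821 — 9 statements merged into one kernel-verified Lean document; each statement's English description precedes it below -/
import Mathlib

section
/- Subspace property of ensemble Kalman inversion: let u^1,…,u^J ∈ ℝ^{d_u} be an ensemble with mean ū = (1/J)Σ_j u^j, let G : ℝ^{d_u} → ℝ^{d_y}, Ḡ = (1/J)Σ_j G(u^j), and define the sample cross-covariance C^{up} = (1/(J−1))Σ_j (u^j − ū)(G(u^j) − Ḡ)ᵀ and output covariance C^{pp} = (1/(J−1))Σ_j (G(u^j) − Ḡ)(G(u^j) − Ḡ)ᵀ. For y ∈ ℝ^{d_y}, define the updated ensemble u^j_+ = u^j + C^{up}(C^{pp} + I)^{−1}(y − G(u^j)). Then for every j, the updated member u^j_+ lies in the linear span of {u^1, …, u^J}; equivalently, any vector v ∈ ℝ^{d_u} orthogonal to all u^1, …, u^J remains orthogonal to all u^1_+, …, u^J_+. -/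
/-!
The gain `C^{up} (C^{pp} + I)⁻¹` acts through `C^{up}`, a sum of rank-one matrices
`(uⱼ - ū) ⊗ (G(uⱼ) - Ḡ)`, so `C^{up} w` is a combination of the centred members `uⱼ - ū`
whatever `w` is. These lie in the span of the ensemble because the mean `ū` does, hence so
does `u⁺ⱼ = uⱼ + C^{up} w`. Orthogonality to the span is then inherited from orthogonality
to the members.
-/

open Matrix Submodule

section

variable {R ι m n : Type*} [CommRing R]

theorem Matrix.sum_vecMulVec_mulVec_mem_span [Fintype ι] [Fintype n]
    (a : ι → m → R) (b : ι → n → R) (w : n → R) :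
    (∑ i, vecMulVec (a i) (b i)) *ᵥ w ∈ span R (Set.range a) := by
  rw [sum_mulVec]
  refine sum_mem fun i _ => ?_
  rw [vecMulVec_mulVec, op_smul_eq_smul]
  exact smul_mem _ _ (subset_span ⟨i, rfl⟩)

theorem Matrix.smul_sum_vecMulVec_sub_mulVec_mem_span [Fintype ι] [Fintype n]
    (u : ι → m → R) {x₀ : m → R} (hx₀ : x₀ ∈ span R (Set.range u)) (c : R) (b : ι → n → R) (w : n → R) :
    (c • ∑ i, vecMulVec (u i - x₀) (b i)) *ᵥ w ∈ span R (Set.range u) := by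
  have hcentred : span R (Set.range fun i => u i - x₀) ≤ span R (Set.range u) := by
    rw [span_le]
    rintro _ ⟨i, rfl⟩
    exact sub_mem (subset_span ⟨i, rfl⟩) hx₀
  rw [smul_mulVec]
  exact smul_mem _ _ (hcentred (sum_vecMulVec_mulVec_mem_span _ b w))

theorem Matrix.dotProduct_eq_zero_of_mem_span [Fintype m] {v : m → R} {u : ι → m → R}
    (hv : ∀ i, v ⬝ᵥ u i = 0) {x : m → R} (hx : x ∈ span R (Set.range u)) :
    v ⬝ᵥ x = 0 := by
  have hker : span R (Set.range u) ≤ LinearMap.ker (dotProductBilin R R v) := by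
    rw [span_le]
    rintro _ ⟨i, rfl⟩
    exact hv i
  exact hker hx

end

theorem eki_subspace_property_general {du dy J : ℕ}
    (u : Fin J → Fin du → ℝ) (G : (Fin du → ℝ) → Fin dy → ℝ) (y : Fin dy → ℝ)
    (ubar : Fin du → ℝ) (hubar : ubar = (J : ℝ)⁻¹ • ∑ j, u j)
    (Gbar : Fin dy → ℝ)
    (Cup : Matrix (Fin du) (Fin dy) ℝ)
    (hCup : Cup = ((J : ℝ) - 1)⁻¹ •
      ∑ j, Matrix.of fun i k => (u j i - ubar i) * (G (u j) k - Gbar k))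
    (Cpp : Matrix (Fin dy) (Fin dy) ℝ)
    (uplus : Fin J → Fin du → ℝ)
    (huplus : ∀ j, uplus j = u j + (Cup * (Cpp + 1)⁻¹).mulVec (y - G (u j))) :
    (∀ j, uplus j ∈ Submodule.span ℝ (Set.range u)) ∧
    (∀ v : Fin du → ℝ, (∀ j, ∑ i, v i * u j i = 0) → ∀ j, ∑ i, v i * uplus j i = 0) := by
  have hmember : ∀ j, u j ∈ span ℝ (Set.range u) := fun j => subset_span ⟨j, rfl⟩
  have hmean : ubar ∈ span ℝ (Set.range u) := by
    rw [hubar]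
    exact smul_mem _ _ (sum_mem fun j _ => hmember j)
  have hupdate : ∀ j, uplus j ∈ span ℝ (Set.range u) := by
    intro j
    rw [huplus j, ← mulVec_mulVec, hCup]
    exact add_mem (hmember j)
      (smul_sum_vecMulVec_sub_mulVec_mem_span u hmean _ (fun j => G (u j) - Gbar) _)
  exact ⟨hupdate, fun v hv j => dotProduct_eq_zero_of_mem_span hv (hupdate j)⟩

/-- **Subspace property of ensemble Kalman inversion.**
The updated ensemble members `u⁺ⱼ = uⱼ + C^{up}(C^{pp}+I)⁻¹(y - G(uⱼ))` lie in the linear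
span of the original ensemble; equivalently any vector orthogonal to all original members
remains orthogonal to all updated members. -/
theorem eki_subspace_property {du dy J : ℕ}
    (u : Fin J → Fin du → ℝ) (G : (Fin du → ℝ) → Fin dy → ℝ) (y : Fin dy → ℝ)
    (ubar : Fin du → ℝ) (hubar : ubar = (J : ℝ)⁻¹ • ∑ j, u j)
    (Gbar : Fin dy → ℝ) (hGbar : Gbar = (J : ℝ)⁻¹ • ∑ j, G (u j))
    (Cup : Matrix (Fin du) (Fin dy) ℝ)
    (hCup : Cup = ((J : ℝ) - 1)⁻¹ •
      ∑ j, Matrix.of fun i k => (u j i - ubar i) * (G (u j) k - Gbar k))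
    (Cpp : Matrix (Fin dy) (Fin dy) ℝ)
    (hCpp : Cpp = ((J : ℝ) - 1)⁻¹ •
      ∑ j, Matrix.of fun i k => (G (u j) i - Gbar i) * (G (u j) k - Gbar k))
    (uplus : Fin J → Fin du → ℝ)
    (huplus : ∀ j, uplus j = u j + (Cup * (Cpp + 1)⁻¹).mulVec (y - G (u j))) :
    (∀ j, uplus j ∈ Submodule.span ℝ (Set.range u)) ∧
    (∀ v : Fin du → ℝ, (∀ j, ∑ i, v i * u j i = 0) → ∀ j, ∑ i, v i * uplus j i = 0) :=
  eki_subspace_property_general u G y ubar hubar Gbar Cup hCup Cpp uplus huplus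
end

section
/- Observability of linearized localization: let C ∈ ℝ^{d_u × d_u} be symmetric positive semidefinite, let Ψ ∈ ℝ^{d_u × d_u} have nonnegative entries, and let H ∈ ℝ^{d_y × d_u}. Define the localized covariance C̃ = C ∘ Ψ (Schur product), and the cross-covariances C^{up} = C Hᵀ and C̃^{up} = C̃ Hᵀ. Assume: (1) all diagonal entries of HᵀH equal the same value H₀ > 0; (2) there is 0 ≤ h₀ < 1 with Σ_{j ≠ i} |[HᵀH]_{j,i}| < h₀ [HᵀH]_{i,i} for all i; (3) Ψ_{i,i} = 1 and Σ_{j ≠ i} Ψ_{i,j} < ψ₀ for all i, with 0 ≤ ψ₀ < 1. Then, letting i* be an index maximizing the diagonal entry C_{i*,i*}, one has Σ_{j=1}^{d_y} C̃^{up}_{i*,j} C^{up}_{i*,j} = [C̃ HᵀH C]_{i*,i*} ≥ H₀ (1 − (h₀ + ψ₀(1 + h₀))) (C_{i*,i*})². -/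
open Matrix Finset

/-!
Write `A = HᵀH`, `c` for the row `i*` of `C` and `M = C_{i*,i*}`, so that the quantity to bound is
`(c ∘ Ψ_{i*}) ⬝ (A c)`. The `2 × 2` principal minors of `C` give `|c_l| ≤ M`; diagonal dominance of
`A` then puts `(A c)_k` within `h₀ H₀ M` of `H₀ c_k`. Hence the term `k = i*` contributes at least
`H₀ (1 - h₀) M²`, while the terms `k ≠ i*`, weighted by `Ψ_{i*,k}`, total at most
`ψ₀ H₀ (1 + h₀) M²` in absolute value.
-/

namespace Matrix

variable {n : Type*}

theorem PosSemidef.sq_apply_le_mul_diag {C : Matrix n n ℝ} (hC : C.PosSemidef) (i j : n) :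
    C i j ^ 2 ≤ C i i * C j j := by
  have hdet := (hC.submatrix ![i, j]).det_nonneg
  have hsymm : C j i = C i j := hC.isHermitian.apply i j
  rw [det_fin_two] at hdet
  simp only [submatrix_apply, cons_val_zero, cons_val_one, hsymm, ← sq] at hdet
  linarith

theorem PosSemidef.abs_apply_le_of_diag_le {C : Matrix n n ℝ} (hC : C.PosSemidef) {M : ℝ}
    (hM : ∀ k, C k k ≤ M) (i j : n) : |C i j| ≤ M := by
  have hM0 : 0 ≤ M := hC.diag_nonneg.trans (hM i)
  refine abs_le_of_sq_le_sq ?_ hM0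
  calc C i j ^ 2 ≤ C i i * C j j := hC.sq_apply_le_mul_diag i j
    _ ≤ M * M := mul_le_mul (hM i) (hM j) hC.diag_nonneg hM0
    _ = M ^ 2 := (sq M).symm

variable [Fintype n]

theorem mul_mul_apply_self {m p : Type*} [Fintype p] {R : Type*} [CommSemiring R]
    (X : Matrix m n R) (A : Matrix n p R) (C : Matrix p m R) (i : m) :
    (X * A * C) i i = X i ⬝ᵥ (A *ᵥ Cᵀ i) := by
  rw [dotProduct_mulVec]
  rfl

variable [DecidableEq n]

theorem abs_mulVec_sub_diag_mul_le (A : Matrix n n ℝ) {c : n → ℝ} {M : ℝ}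
    (hc : ∀ l, |c l| ≤ M) (k : n) :
    |(A *ᵥ c) k - A k k * c k| ≤ (∑ l ∈ univ.erase k, |A k l|) * M := by
  rw [mulVec, dotProduct, ← add_sum_erase _ _ (mem_univ k), add_sub_cancel_left, sum_mul]
  refine (abs_sum_le_sum_abs _ _).trans (sum_le_sum fun l _ => ?_)
  rw [abs_mul]
  exact mul_le_mul_of_nonneg_left (hc l) (abs_nonneg _)

theorem le_dotProduct_mul_mulVec (A : Matrix n n ℝ) {c ψ : n → ℝ} {i : n} {a h₀ ψ₀ : ℝ}
    (hc : ∀ l, |c l| ≤ c i) (hψ : ∀ k, 0 ≤ ψ k) (hψi : ψ i = 1)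
    (hψoff : ∑ k ∈ univ.erase i, ψ k ≤ ψ₀) (ha : 0 ≤ a) (hAdiag : ∀ k, A k k = a)
    (hAoff : ∀ k, ∑ l ∈ univ.erase k, |A k l| ≤ h₀ * a) :
    a * (1 - (h₀ + ψ₀ * (1 + h₀))) * c i ^ 2 ≤ (c * ψ) ⬝ᵥ (A *ᵥ c) := by
  set M := c i
  have hM : 0 ≤ M := (abs_nonneg _).trans (hc i)
  have hbound : 0 ≤ a * (1 + h₀) := by
    linarith [hAoff i, sum_nonneg fun l (_ : l ∈ univ.erase i) => abs_nonneg (A i l)]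
  have hnear : ∀ k, |(A *ᵥ c) k - a * c k| ≤ h₀ * a * M := fun k => by
    simpa only [hAdiag] using
      (abs_mulVec_sub_diag_mul_le A hc k).trans (mul_le_mul_of_nonneg_right (hAoff k) hM)
  have hrow : ∀ k, |(A *ᵥ c) k| ≤ a * (1 + h₀) * M := fun k => by
    have := abs_sub_abs_le_abs_sub ((A *ᵥ c) k) (a * c k)
    rw [abs_mul, abs_of_nonneg ha] at this
    linarith [mul_le_mul_of_nonneg_left (hc k) ha, hnear k]
  have hcentre : M * (a * M - h₀ * a * M) ≤ M * (A *ᵥ c) i :=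
    mul_le_mul_of_nonneg_left (by linarith [(abs_le.mp (hnear i)).1]) hM
  have hrest : |∑ k ∈ univ.erase i, c k * ψ k * (A *ᵥ c) k| ≤ ψ₀ * (a * (1 + h₀)) * M ^ 2 :=
    calc _ ≤ ∑ k ∈ univ.erase i, ψ k * (a * (1 + h₀) * M ^ 2) := by
          refine (abs_sum_le_sum_abs _ _).trans (sum_le_sum fun k _ => ?_)
          rw [abs_mul, abs_mul, abs_of_nonneg (hψ k)]
          calc |c k| * ψ k * |(A *ᵥ c) k| ≤ M * ψ k * (a * (1 + h₀) * M) :=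
                mul_le_mul (mul_le_mul_of_nonneg_right (hc k) (hψ k)) (hrow k) (abs_nonneg _)
                  (mul_nonneg hM (hψ k))
            _ = ψ k * (a * (1 + h₀) * M ^ 2) := by ring
      _ = (∑ k ∈ univ.erase i, ψ k) * (a * (1 + h₀) * M ^ 2) := (sum_mul ..).symm
      _ ≤ ψ₀ * (a * (1 + h₀) * M ^ 2) := by gcongr
      _ = ψ₀ * (a * (1 + h₀)) * M ^ 2 := by ring
  rw [dotProduct, ← add_sum_erase _ _ (mem_univ i)]
  simp only [Pi.mul_apply, hψi, mul_one]
  linarith [(abs_le.mp hrest).1]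

end Matrix

theorem observability_linearized_localization_general {du dy : ℕ}
    (C Ψ : Matrix (Fin du) (Fin du) ℝ) (H : Matrix (Fin dy) (Fin du) ℝ)
    (hC : C.PosSemidef) (hΨnn : ∀ i j, 0 ≤ Ψ i j)
    (H₀ h₀ ψ₀ : ℝ)
    (hdiag : ∀ i, (Hᵀ * H) i i = H₀)
    (hoff : ∀ i, ∑ j ∈ Finset.univ.erase i, |(Hᵀ * H) j i| < h₀ * (Hᵀ * H) i i)
    (hΨdiag : ∀ i, Ψ i i = 1)
    (hΨoff : ∀ i, ∑ j ∈ Finset.univ.erase i, Ψ i j < ψ₀)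
    (istar : Fin du) (histar : ∀ i, C i i ≤ C istar istar) :
    (∑ j, (C.hadamard Ψ * Hᵀ) istar j * (C * Hᵀ) istar j
        = (C.hadamard Ψ * Hᵀ * H * C) istar istar) ∧
    H₀ * (1 - (h₀ + ψ₀ * (1 + h₀))) * C istar istar ^ 2
        ≤ (C.hadamard Ψ * Hᵀ * H * C) istar istar := by
  have hCsymm : Cᵀ = C := hC.isHermitian
  have hGram : ∀ j k, (Hᵀ * H) j k = (Hᵀ * H) k j := fun j k => by
    rw [← transpose_apply (Hᵀ * H), transpose_mul, transpose_transpose]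
  have hquad : (C.hadamard Ψ * Hᵀ * H * C) istar istar
      = (C istar * Ψ istar) ⬝ᵥ ((Hᵀ * H) *ᵥ C istar) := by
    rw [Matrix.mul_assoc _ Hᵀ H, mul_mul_apply_self, hCsymm]
    rfl
  refine ⟨?_, ?_⟩
  · calc _ = (C.hadamard Ψ * Hᵀ * (C * Hᵀ)ᵀ) istar istar := by
          simp only [mul_apply, transpose_apply]
      _ = _ := by rw [transpose_mul, hCsymm, transpose_transpose, ← Matrix.mul_assoc]
  · rw [hquad]
    refine le_dotProduct_mul_mulVec _ (fun l => hC.abs_apply_le_of_diag_le histar istar l)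
      (hΨnn istar) (hΨdiag istar) (hΨoff istar).le ?_ hdiag fun k => ?_
    · rw [← hdiag istar, mul_apply]
      exact sum_nonneg fun j _ => mul_self_nonneg _
    · simpa only [hGram k, hdiag] using (hoff k).le

/-- **Observability of the linearized localization scheme** (Lemma 4.3 of the paper).
For `C̃ = C ∘ Ψ`, `C^{up} = C Hᵀ`, `C̃^{up} = C̃ Hᵀ`, under diagonal-dominance conditions
on `HᵀH` and `Ψ`, at an index `i*` maximizing the diagonal of `C` one has
`Σ_j C̃^{up}_{i*,j} C^{up}_{i*,j} = [C̃ HᵀH C]_{i*,i*} ≥ H₀(1 - (h₀ + ψ₀(1+h₀)))(C_{i*,i*})²`. -/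
theorem observability_linearized_localization {du dy : ℕ}
    (C Ψ : Matrix (Fin du) (Fin du) ℝ) (H : Matrix (Fin dy) (Fin du) ℝ)
    (hC : C.PosSemidef) (hΨnn : ∀ i j, 0 ≤ Ψ i j)
    (H₀ h₀ ψ₀ : ℝ) (hH₀ : 0 < H₀)
    (hdiag : ∀ i, (Hᵀ * H) i i = H₀)
    (hh₀ : 0 ≤ h₀) (hh₀' : h₀ < 1)
    (hoff : ∀ i, ∑ j ∈ Finset.univ.erase i, |(Hᵀ * H) j i| < h₀ * (Hᵀ * H) i i)
    (hΨdiag : ∀ i, Ψ i i = 1)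
    (hψ₀ : 0 ≤ ψ₀) (hψ₀' : ψ₀ < 1)
    (hΨoff : ∀ i, ∑ j ∈ Finset.univ.erase i, Ψ i j < ψ₀)
    (istar : Fin du) (histar : ∀ i, C i i ≤ C istar istar) :
    (∑ j, (C.hadamard Ψ * Hᵀ) istar j * (C * Hᵀ) istar j
        = (C.hadamard Ψ * Hᵀ * H * C) istar istar) ∧
    H₀ * (1 - (h₀ + ψ₀ * (1 + h₀))) * C istar istar ^ 2
        ≤ (C.hadamard Ψ * Hᵀ * H * C) istar istar :=
  observability_linearized_localization_general C Ψ H hC hΨnn H₀ h₀ ψ₀ hdiag hoff hΨdiag hΨoff istar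
    histar
end

section
/- Ensemble covariance upper bound (Theorem 4.1 of the paper): fix σ ≥ 0 and c_o > 0. Let C^{uu} : [0,∞) → ℝ^{d_u × d_u} be a continuously differentiable family of symmetric positive semidefinite matrices, and let C^{up}, C̃^{up} : [0,∞) → ℝ^{d_u × d_y} be continuous, such that for every t ≥ 0 and every i, d/dt C^{uu}_{i,i}(t) = −2 Σ_{j=1}^{d_y} C̃^{up}_{i,j}(t) C^{up}_{i,j}(t) + σ/(t+1)². Assume the observability condition: for all t ≥ 0, with i* = i*(t) an index such that C^{uu}_{i*,i*}(t) = ‖C^{uu}(t)‖_max, one has Σ_{j=1}^{d_y} C̃^{up}_{i*,j}(t) C^{up}_{i*,j}(t) ≥ c_o (C^{uu}_{i*,i*}(t))². Then for every δ ∈ (0,1) there exists t₀ ≥ 0 such that for all t ≥ t₀, ‖C^{uu}(t)‖_max ≤ M_C/(1+t), where M_C = (√(1 + 8 c_o σ) + 1)/(4 c_o (1 − δ)). -/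
open Matrix Set Filter Topology

/-! The largest diagonal entry `V t = maxᵢ C^{uu}ᵢᵢ(t)` has upper right Dini derivative at most
`σ/(t+1)² - 2 c_o V t²`: only the maximizing indices matter, and for those the observability
condition applies. For `M` above the positive root `(√(1+8c_oσ)+1)/(4c_o)` of `2 c_o M² - M = σ`,
every curve `M/(t+τ)` with `0 < τ ≤ 1` is a strict supersolution of this Riccati inequality, so
choosing `τ` with `V 0 ≤ M/τ` it stays above `V`. Any such `M` below `M_C` then gives the bound
for large `t`, and positive semidefiniteness bounds the off-diagonal entries by the diagonal. -/

lemma Matrix.PosSemidef.two_mul_abs_apply_le {n : Type*} [Fintype n] [DecidableEq n]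
    {C : Matrix n n ℝ} (hC : C.PosSemidef) (i j : n) : 2 * |C i j| ≤ C i i + C j j := by
  have hsymm : C j i = C i j := by simpa using hC.1.apply i j
  have hplus := hC.dotProduct_mulVec_nonneg (Pi.single i 1 + Pi.single j 1)
  have hminus := hC.dotProduct_mulVec_nonneg (Pi.single i 1 + Pi.single j (-1))
  simp [dotProduct_add, add_dotProduct, mulVec_add, mulVec_single, single_dotProduct, hsymm]
    at hplus hminus
  rcases abs_cases (C i j) with ⟨h, _⟩ | ⟨h, _⟩ <;> rw [h] <;> linarith

lemma eventually_slope_finset_sup'_lt {ι : Type*} {s : Finset ι} (hs : s.Nonempty)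
    {f : ι → ℝ → ℝ} {f' : ι → ℝ} {x q : ℝ}
    (hf : ∀ i ∈ s, HasDerivWithinAt (f i) (f' i) (Ioi x) x)
    (hq : ∀ i ∈ s, f i x = s.sup' hs (fun j => f j x) → f' i < q) :
    ∀ᶠ z in 𝓝[>] x, slope (fun t => s.sup' hs fun i => f i t) x z < q := by
  have hlt : ∀ i ∈ s, ∀ᶠ z in 𝓝[>] x, f i z < s.sup' hs (fun j => f j x) + q * (z - x) := by
    intro i hi
    rcases (Finset.le_sup' (fun j => f j x) hi).eq_or_lt with hmax | hnonmax
    · have hslope := (hasDerivWithinAt_iff_tendsto_slope' (lt_irrefl x)).1 (hf i hi)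
      filter_upwards [hslope.eventually_lt_const (hq i hi hmax), self_mem_nhdsWithin]
        with z hz hzx
      rw [slope_def_field, div_lt_iff₀ (sub_pos.2 hzx)] at hz
      linarith
    · -- a non-maximal index stays below the maximum by continuity
      have hcont : ContinuousWithinAt (fun z => f i z - q * (z - x)) (Ioi x) x :=
        (hf i hi).continuousWithinAt.sub (by fun_prop)
      have hlim : Tendsto (fun z => f i z - q * (z - x)) (𝓝[>] x) (𝓝 (f i x)) := by
        simpa using hcont.tendsto
      filter_upwards [hlim.eventually_lt_const hnonmax] with z hz
      linarith
  filter_upwards [(eventually_all_finset s).2 hlt, self_mem_nhdsWithin] with z hz hzx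
  rw [slope_def_field, div_lt_iff₀ (sub_pos.2 hzx)]
  linarith [(Finset.sup'_lt_iff hs).2 hz]

lemma lt_two_mul_sq_sub_of_riccati_root_lt {σ c M : ℝ} (hσ : 0 ≤ σ) (hc : 0 < c)
    (hM : (√(1 + 8 * c * σ) + 1) / (4 * c) < M) : σ < 2 * c * M ^ 2 - M := by
  rw [div_lt_iff₀ (by positivity)] at hM
  have hsq : √(1 + 8 * c * σ) ^ 2 = 1 + 8 * c * σ := Real.sq_sqrt (by positivity)
  nlinarith [Real.sqrt_nonneg (1 + 8 * c * σ)]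

lemma le_div_add_of_riccati_slope_lt {V : ℝ → ℝ} {σ c M τ : ℝ} (hσ : 0 ≤ σ) (hτ : 0 < τ)
    (hτ1 : τ ≤ 1) (hM : σ < 2 * c * M ^ 2 - M) (hV : ContinuousOn V (Ici 0))
    (hV' : ∀ x, 0 ≤ x → ∀ r, σ / (x + 1) ^ 2 - 2 * c * V x ^ 2 < r →
      ∃ᶠ z in 𝓝[>] x, slope V x z < r)
    (hV0 : V 0 ≤ M / τ) {t : ℝ} (ht : 0 ≤ t) : V t ≤ M / (t + τ) := by
  have hpos : ∀ x ∈ Icc 0 t, 0 < x + τ := fun x hx => by linarith [hx.1]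
  refine image_le_of_liminf_slope_right_lt_deriv_boundary' (B := fun x => M / (x + τ))
    (B' := fun x => -M / (x + τ) ^ 2) (hV.mono Icc_subset_Ici_self) (fun x hx => hV' x hx.1)
    (by simpa using hV0) (fun x hx => ?_) (fun x hx => ?_) (fun x hx hVx => ?_) (right_mem_Icc.2 ht)
  · exact (continuousAt_const.div (continuousAt_id.add continuousAt_const)
      (hpos x hx).ne').continuousWithinAt
  · have hderiv : HasDerivAt (fun y => M / (y + τ)) (-M / (x + τ) ^ 2) x := by
      simpa using (hasDerivAt_const x M).fun_div ((hasDerivAt_id' x).add_const τ)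
        (hpos x (Ico_subset_Icc_self hx)).ne'
    exact hderiv.hasDerivWithinAt
  · have hx' := hpos x (Ico_subset_Icc_self hx)
    have hσle : σ / (x + 1) ^ 2 ≤ σ / (x + τ) ^ 2 :=
      div_le_div_of_nonneg_left hσ (by positivity) (by gcongr)
    calc σ / (x + 1) ^ 2 - 2 * c * V x ^ 2
        ≤ (σ - 2 * c * M ^ 2) / (x + τ) ^ 2 := by
          rw [hVx, div_pow, sub_div]; linarith [mul_div_assoc (2 * c) (M ^ 2) ((x + τ) ^ 2)]
      _ < -M / (x + τ) ^ 2 := by gcongr; linarith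

lemma exists_forall_div_add_le_div_one_add {M M' τ : ℝ} (hτ : 0 < τ) (hM : M < M') :
    ∃ t₀, 0 ≤ t₀ ∧ ∀ t, t₀ ≤ t → M / (t + τ) ≤ M' / (1 + t) := by
  refine ⟨max 0 ((M - M' * τ) / (M' - M)), le_max_left _ _, fun t ht => ?_⟩
  have ht0 : 0 ≤ t := (le_max_left _ _).trans ht
  have hlin : M - M' * τ ≤ (M' - M) * t := by
    rw [← div_le_iff₀' (sub_pos.2 hM)]; exact (le_max_right _ _).trans ht
  rw [div_le_div_iff₀ (by positivity) (by positivity)]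
  linarith

lemma exists_forall_apply_le_div_add_of_riccati {ι : Type*} [Fintype ι] [Nonempty ι]
    {f f' : ι → ℝ → ℝ} {σ c M : ℝ} (hσ : 0 ≤ σ) (hM0 : 0 < M) (hM : σ < 2 * c * M ^ 2 - M)
    (hf : ∀ t, 0 ≤ t → ∀ i, HasDerivAt (f i) (f' i t) t)
    (hmax : ∀ t, 0 ≤ t → ∀ i, (∀ k, f k t ≤ f i t) →
      f' i t ≤ σ / (t + 1) ^ 2 - 2 * c * f i t ^ 2) :
    ∃ τ, 0 < τ ∧ ∀ t, 0 ≤ t → ∀ i, f i t ≤ M / (t + τ) := by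
  set V : ℝ → ℝ := fun t => Finset.univ.sup' Finset.univ_nonempty fun i => f i t
  have hle_V : ∀ t i, f i t ≤ V t := fun t i =>
    Finset.le_sup' (fun k => f k t) (Finset.mem_univ i)
  have hV_cont : ContinuousOn V (Ici 0) := ContinuousOn.finset_sup'_apply _
    fun i _ t ht => (hf t ht i).continuousAt.continuousWithinAt
  have hV_slope : ∀ x, 0 ≤ x → ∀ r, σ / (x + 1) ^ 2 - 2 * c * V x ^ 2 < r →
      ∃ᶠ z in 𝓝[>] x, slope V x z < r := fun x hx r hr =>
    (eventually_slope_finset_sup'_lt _ (fun i _ => (hf x hx i).hasDerivWithinAt)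
      fun i _ hi => by
        have := hmax x hx i fun k => hi ▸ hle_V x k
        rw [hi] at this
        linarith).frequently
  refine ⟨M / max (V 0) M, by positivity, fun t ht i => (hle_V t i).trans ?_⟩
  refine le_div_add_of_riccati_slope_lt hσ (by positivity) ?_ hM hV_cont hV_slope ?_ ht
  · exact (div_le_one (by positivity)).2 (le_max_right _ _)
  · rw [div_div_cancel₀ hM0.ne']
    exact le_max_left _ _

theorem ensemble_covariance_upper_bound_general {du dy : ℕ}
    (σ c_o : ℝ) (hσ : 0 ≤ σ) (hc_o : 0 < c_o)
    (Cuu : ℝ → Matrix (Fin du) (Fin du) ℝ)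
    (Cup Ctup : ℝ → Matrix (Fin du) (Fin dy) ℝ)
    (hpsd : ∀ t, 0 ≤ t → (Cuu t).PosSemidef)
    (hODE : ∀ t, 0 ≤ t → ∀ i,
      HasDerivAt (fun s => Cuu s i i)
        (-2 * ∑ j, Ctup t i j * Cup t i j + σ / (t + 1) ^ 2) t)
    (hobs : ∀ t, 0 ≤ t → ∀ istar : Fin du,
      (∀ i, Cuu t i i ≤ Cuu t istar istar) →
      c_o * Cuu t istar istar ^ 2 ≤ ∑ j, Ctup t istar j * Cup t istar j)
    (δ : ℝ) (hδ : 0 < δ) (hδ' : δ < 1)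
    (M_C : ℝ) (hM_C : M_C = (Real.sqrt (1 + 8 * c_o * σ) + 1) / (4 * c_o * (1 - δ))) :
    ∃ t₀ : ℝ, 0 ≤ t₀ ∧ ∀ t, t₀ ≤ t → ∀ i j, |Cuu t i j| ≤ M_C / (1 + t) := by
  rcases isEmpty_or_nonempty (Fin du) with hdu | hdu
  · exact ⟨0, le_rfl, fun _ _ i => isEmptyElim i⟩
  set Ms := (√(1 + 8 * c_o * σ) + 1) / (4 * c_o)
  have hMs : 0 < Ms := by positivity
  have hMs_lt : Ms < M_C := by
    rw [hM_C, ← div_div, lt_div_iff₀ (sub_pos.2 hδ')]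
    nlinarith
  obtain ⟨M, hMs_M, hM_MC⟩ := exists_between hMs_lt
  obtain ⟨τ, hτ, hdiag_le⟩ := exists_forall_apply_le_div_add_of_riccati hσ (hMs.trans hMs_M)
    (lt_two_mul_sq_sub_of_riccati_root_lt hσ hc_o hMs_M) hODE fun t ht i hi => by
      linarith [hobs t ht i hi]
  obtain ⟨t₀, ht₀, hdecay⟩ := exists_forall_div_add_le_div_one_add hτ hM_MC
  refine ⟨t₀, ht₀, fun t ht i j => ?_⟩
  have hdiag : ∀ k, Cuu t k k ≤ M_C / (1 + t) := fun k =>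
    (hdiag_le t (ht₀.trans ht) k).trans (hdecay t ht)
  linarith [(hpsd t (ht₀.trans ht)).two_mul_abs_apply_le i j, hdiag i, hdiag j]

/-- **Ensemble covariance upper bound** (Theorem 4.1 of the paper).
Under the observability assumption, the diagonal of the ensemble covariance of the localized
EKI decays at least like `M_C/(1+t)`, with `M_C = (√(1+8c_oσ)+1)/(4c_o(1-δ))`.  Since the
matrices are positive semidefinite, the bound on all entries expresses `‖C^{uu}(t)‖_max ≤
M_C/(1+t)`. -/
theorem ensemble_covariance_upper_bound {du dy : ℕ}
    (σ c_o : ℝ) (hσ : 0 ≤ σ) (hc_o : 0 < c_o)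
    (Cuu : ℝ → Matrix (Fin du) (Fin du) ℝ)
    (Cup Ctup : ℝ → Matrix (Fin du) (Fin dy) ℝ)
    (hpsd : ∀ t, 0 ≤ t → (Cuu t).PosSemidef)
    (hCupCont : ContinuousOn Cup (Set.Ici (0 : ℝ)))
    (hCtupCont : ContinuousOn Ctup (Set.Ici (0 : ℝ)))
    (hODE : ∀ t, 0 ≤ t → ∀ i,
      HasDerivAt (fun s => Cuu s i i)
        (-2 * ∑ j, Ctup t i j * Cup t i j + σ / (t + 1) ^ 2) t)
    (hobs : ∀ t, 0 ≤ t → ∀ istar : Fin du,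
      (∀ i, Cuu t i i ≤ Cuu t istar istar) →
      c_o * Cuu t istar istar ^ 2 ≤ ∑ j, Ctup t istar j * Cup t istar j)
    (δ : ℝ) (hδ : 0 < δ) (hδ' : δ < 1)
    (M_C : ℝ) (hM_C : M_C = (Real.sqrt (1 + 8 * c_o * σ) + 1) / (4 * c_o * (1 - δ))) :
    ∃ t₀ : ℝ, 0 ≤ t₀ ∧ ∀ t, t₀ ≤ t → ∀ i j, |Cuu t i j| ≤ M_C / (1 + t) :=
  ensemble_covariance_upper_bound_general σ c_o hσ hc_o Cuu Cup Ctup hpsd hODE hobs δ hδ hδ' M_C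
    hM_C
end

section
/- Regularity of centralized localization: let u^1,…,u^J ∈ ℝ^{d_u} be an ensemble with mean ū, let G : ℝ^{d_u} → ℝ^{d_y}, and define the sample covariance C^{uu} and cross-covariance C^{up} as usual. Let i : {1,…,d_y} → {1,…,d_u}, let Ψ ∈ ℝ^{d_u × d_u} have nonnegative entries, and define the centralized localization C̃^{up}_{i,j} = C^{up}_{i,j} Ψ_{i,i(j)}. Suppose each component G_j is component-wise Lipschitz: |G_j(u) − G_j(v)| ≤ Σ_k L_{j,k}|u_k − v_k| for all u, v, with Σ_k L_{j,k} ≤ L for all j. Then for every index i, Σ_{j=1}^{d_y} C̃^{up}_{i,j} C^{up}_{i,j} ≤ L_R · C^{uu}_{i,i} · ‖C^{uu}‖_max, where L_R = L² · max_i Σ_{j=1}^{d_y} Ψ_{i,i(j)}. -/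
/-! Because centred deviations sum to zero, the mean `Ḡ_j` in `C^{up}_{i,j}` may be replaced
by the constant `G_j(ū)`. The Lipschitz bound then gives
`|C^{up}_{i,j}| ≤ Σ_k L_{j,k} · (J-1)⁻¹ Σ_m |u^m_i - ū_i| |u^m_k - ū_k|`,
and Cauchy–Schwarz bounds each inner sum by
`√(C^{uu}_{i,i} C^{uu}_{k,k}) ≤ √(C^{uu}_{i,i} ‖C^{uu}‖_max)`. Hence
`|C^{up}_{i,j}| ≤ L √(C^{uu}_{i,i} ‖C^{uu}‖_max)`; squaring and summing against the weights
`Ψ_{i,i(j)}` gives the claim. -/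

open Matrix

/-- The maximal diagonal entry of a matrix; for a positive semidefinite matrix this equals
`‖C‖_max = max_{i,j}|C_{i,j}|`. -/
noncomputable def maxDiag {n : ℕ} (A : Matrix (Fin n) (Fin n) ℝ) : ℝ := ⨆ i, A i i

open Finset

section SampleCovariance

variable {ι : Type*} [Fintype ι]

noncomputable def sampleMean (x : ι → ℝ) : ℝ := (Fintype.card ι : ℝ)⁻¹ * ∑ m, x m

noncomputable def sampleCov (x y : ι → ℝ) : ℝ :=
  ((Fintype.card ι : ℝ) - 1)⁻¹ * ∑ m, (x m - sampleMean x) * (y m - sampleMean y)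

lemma inv_card_sub_one_nonneg [Nonempty ι] : 0 ≤ ((Fintype.card ι : ℝ) - 1)⁻¹ := by
  have : (1 : ℝ) ≤ Fintype.card ι := by exact_mod_cast Fintype.card_pos
  exact inv_nonneg.mpr (by linarith)

lemma sampleCov_of_isEmpty [IsEmpty ι] (x y : ι → ℝ) : sampleCov x y = 0 := by
  simp [sampleCov]

lemma sum_sub_sampleMean (x : ι → ℝ) : ∑ m, (x m - sampleMean x) = 0 := by
  rcases isEmpty_or_nonempty ι with _ | _
  · simp
  · simp [sampleMean, sum_sub_distrib]

lemma sampleCov_eq_sum_sub_const (x y : ι → ℝ) (b : ℝ) :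
    sampleCov x y = ((Fintype.card ι : ℝ) - 1)⁻¹ * ∑ m, (x m - sampleMean x) * (y m - b) := by
  have h : ∑ m, (x m - sampleMean x) * (y m - sampleMean y)
      = ∑ m, (x m - sampleMean x) * (y m - b) + (∑ m, (x m - sampleMean x)) * (b - sampleMean y) := by
    rw [sum_mul, ← sum_add_distrib]
    exact sum_congr rfl fun m _ => by ring
  rw [sampleCov, h, sum_sub_sampleMean, zero_mul, add_zero]

lemma sampleCov_self_nonneg (x : ι → ℝ) : 0 ≤ sampleCov x x := by
  rcases isEmpty_or_nonempty ι with _ | _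
  · simp [sampleCov_of_isEmpty]
  · exact mul_nonneg inv_card_sub_one_nonneg (sum_nonneg fun m _ => mul_self_nonneg _)

lemma sum_abs_mul_abs_le_sqrt_sampleCov [Nonempty ι] (x y : ι → ℝ) :
    ((Fintype.card ι : ℝ) - 1)⁻¹ * ∑ m, |x m - sampleMean x| * |y m - sampleMean y|
      ≤ √(sampleCov x x) * √(sampleCov y y) := by
  set c := ((Fintype.card ι : ℝ) - 1)⁻¹
  have hc : 0 ≤ c := inv_card_sub_one_nonneg
  calc c * ∑ m, |x m - sampleMean x| * |y m - sampleMean y|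
      ≤ c * (√(∑ m, |x m - sampleMean x| ^ 2) * √(∑ m, |y m - sampleMean y| ^ 2)) := by
        gcongr; exact Real.sum_mul_le_sqrt_mul_sqrt _ _ _
    _ = √(c * ∑ m, |x m - sampleMean x| ^ 2) * √(c * ∑ m, |y m - sampleMean y| ^ 2) := by
        rw [Real.sqrt_mul hc, Real.sqrt_mul hc]
        linear_combination (-(√(∑ m, |x m - sampleMean x| ^ 2) * √(∑ m, |y m - sampleMean y| ^ 2)))
          * Real.mul_self_sqrt hc
    _ = √(sampleCov x x) * √(sampleCov y y) := by
        simp only [sampleCov, sq, abs_mul_abs_self, c]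

lemma nonneg_of_abs_sub_le_sum_mul_abs_sub {κ : Type*} [Fintype κ] [DecidableEq κ]
    {g : (κ → ℝ) → ℝ} {ℓ : κ → ℝ} (hg : ∀ a b, |g a - g b| ≤ ∑ k, ℓ k * |a k - b k|) (k : κ) :
    0 ≤ ℓ k := by
  simpa [Pi.single_apply, apply_ite] using (abs_nonneg _).trans (hg 0 (Pi.single k 1))

lemma abs_sampleCov_comp_le {κ : Type*} [Fintype κ] (x : ι → ℝ) (v : ι → κ → ℝ)
    {g : (κ → ℝ) → ℝ} {ℓ : κ → ℝ} (hg : ∀ a b, |g a - g b| ≤ ∑ k, ℓ k * |a k - b k|) :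
    |sampleCov x (fun m => g (v m))|
      ≤ ∑ k, ℓ k * (√(sampleCov x x) * √(sampleCov (fun m => v m k) (fun m => v m k))) := by
  classical
  have hℓ := nonneg_of_abs_sub_le_sum_mul_abs_sub hg
  rcases isEmpty_or_nonempty ι with _ | _
  · rw [sampleCov_of_isEmpty, abs_zero]
    exact sum_nonneg fun k _ => mul_nonneg (hℓ k) (by positivity)
  set c := ((Fintype.card ι : ℝ) - 1)⁻¹
  have hc : 0 ≤ c := inv_card_sub_one_nonneg
  set vbar : κ → ℝ := fun k => sampleMean fun m => v m k
  rw [sampleCov_eq_sum_sub_const x _ (g vbar), abs_mul, abs_of_nonneg hc]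
  calc c * |∑ m, (x m - sampleMean x) * (g (v m) - g vbar)|
      ≤ c * ∑ m, |x m - sampleMean x| * ∑ k, ℓ k * |v m k - vbar k| := by
        gcongr
        refine (abs_sum_le_sum_abs _ _).trans (sum_le_sum fun m _ => ?_)
        rw [abs_mul]
        exact mul_le_mul_of_nonneg_left (hg _ _) (abs_nonneg _)
    _ = ∑ k, ℓ k * (c * ∑ m, |x m - sampleMean x| * |v m k - vbar k|) := by
        simp only [mul_sum]
        rw [sum_comm]
        exact sum_congr rfl fun k _ => sum_congr rfl fun m _ => by ring
    _ ≤ _ := sum_le_sum fun k _ =>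
        mul_le_mul_of_nonneg_left (sum_abs_mul_abs_le_sqrt_sampleCov _ _) (hℓ k)

lemma abs_sampleCov_comp_le_mul_sqrt {κ : Type*} [Fintype κ] (x : ι → ℝ) (v : ι → κ → ℝ)
    {g : (κ → ℝ) → ℝ} {ℓ : κ → ℝ} (hg : ∀ a b, |g a - g b| ≤ ∑ k, ℓ k * |a k - b k|)
    {L B : ℝ} (hL : ∑ k, ℓ k ≤ L) (hB : ∀ k, sampleCov (fun m => v m k) (fun m => v m k) ≤ B) :
    |sampleCov x (fun m => g (v m))| ≤ L * √(sampleCov x x * B) := by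
  classical
  calc |sampleCov x (fun m => g (v m))|
      ≤ ∑ k, ℓ k * (√(sampleCov x x) * √(sampleCov (fun m => v m k) (fun m => v m k))) :=
        abs_sampleCov_comp_le x v hg
    _ ≤ ∑ k, ℓ k * (√(sampleCov x x) * √B) := by
        gcongr with k
        · exact nonneg_of_abs_sub_le_sum_mul_abs_sub hg k
        · exact hB k
    _ = (∑ k, ℓ k) * √(sampleCov x x * B) := by
        rw [← sum_mul, ← Real.sqrt_mul (sampleCov_self_nonneg x)]
    _ ≤ L * √(sampleCov x x * B) := by gcongr

end SampleCovariance

lemma sum_mul_sq_le_of_abs_le {ι : Type*} [Fintype ι] {w a : ι → ℝ} {W B : ℝ}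
    (hw : ∀ j, 0 ≤ w j) (hW : ∑ j, w j ≤ W) (ha : ∀ j, |a j| ≤ B) :
    ∑ j, w j * a j ^ 2 ≤ W * B ^ 2 := calc
  ∑ j, w j * a j ^ 2 ≤ ∑ j, w j * B ^ 2 := sum_le_sum fun j _ =>
      mul_le_mul_of_nonneg_left (sq_le_sq' (abs_le.mp (ha j)).1 (abs_le.mp (ha j)).2) (hw j)
  _ ≤ W * B ^ 2 := by rw [← sum_mul]; exact mul_le_mul_of_nonneg_right hW (sq_nonneg _)

lemma le_maxDiag {n : ℕ} (A : Matrix (Fin n) (Fin n) ℝ) (k : Fin n) : A k k ≤ maxDiag A :=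
  le_ciSup (f := fun i => A i i) (Set.finite_range _).bddAbove k

/-- **Regularity of the centralized localization scheme** (Lemma 4.4 of the paper).
If every observation component `G_j` is component-wise Lipschitz with coefficients summing to
at most `L`, then for every index `i`,
`Σ_j C̃^{up}_{i,j} C^{up}_{i,j} ≤ L_R C^{uu}_{i,i} ‖C^{uu}‖_max`, where
`L_R = L² max_i Σ_j Ψ_{i,i(j)}`. -/
theorem regularity_centralized_localization {du dy J : ℕ}
    (u : Fin J → Fin du → ℝ) (G : (Fin du → ℝ) → Fin dy → ℝ)
    (ubar : Fin du → ℝ) (hubar : ubar = (J : ℝ)⁻¹ • ∑ m, u m)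
    (Gbar : Fin dy → ℝ) (hGbar : Gbar = (J : ℝ)⁻¹ • ∑ m, G (u m))
    (Cuu : Matrix (Fin du) (Fin du) ℝ)
    (hCuu : Cuu = ((J : ℝ) - 1)⁻¹ •
      ∑ m, Matrix.of fun i k => (u m i - ubar i) * (u m k - ubar k))
    (Cup : Matrix (Fin du) (Fin dy) ℝ)
    (hCup : Cup = ((J : ℝ) - 1)⁻¹ •
      ∑ m, Matrix.of fun i k => (u m i - ubar i) * (G (u m) k - Gbar k))
    (center : Fin dy → Fin du)
    (Ψ : Matrix (Fin du) (Fin du) ℝ) (hΨnn : ∀ i j, 0 ≤ Ψ i j)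
    (Ctup : Matrix (Fin du) (Fin dy) ℝ)
    (hCtup : ∀ i j, Ctup i j = Cup i j * Ψ i (center j))
    (Lc : Fin dy → Fin du → ℝ) (L : ℝ)
    (hLip : ∀ j (v w : Fin du → ℝ), |G v j - G w j| ≤ ∑ k, Lc j k * |v k - w k|)
    (hL : ∀ j, ∑ k, Lc j k ≤ L)
    (L_R : ℝ) (hL_R : L_R = L ^ 2 * ⨆ i : Fin du, ∑ j, Ψ i (center j)) :
    ∀ i, ∑ j, Ctup i j * Cup i j ≤ L_R * Cuu i i * maxDiag Cuu := by
  intro i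
  have hCuu' : ∀ k l, Cuu k l = sampleCov (fun m => u m k) (fun m => u m l) := by
    subst hCuu hubar
    simp [sampleCov, sampleMean, Matrix.sum_apply, Finset.sum_apply]
  have hCup' : ∀ j, Cup i j = sampleCov (fun m => u m i) (fun m => G (u m) j) := by
    subst hCup hubar hGbar
    simp [sampleCov, sampleMean, Matrix.sum_apply, Finset.sum_apply]
  have hdiag : ∀ k, 0 ≤ Cuu k k := fun k => hCuu' k k ▸ sampleCov_self_nonneg _
  have hCup_le : ∀ j, |Cup i j| ≤ L * √(Cuu i i * maxDiag Cuu) := fun j => by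
    rw [hCup', hCuu' i i]
    exact abs_sampleCov_comp_le_mul_sqrt (fun m => u m i) u (hLip j)
      (hL j) (fun k => hCuu' k k ▸ le_maxDiag Cuu k)
  have hΨ_le : ∑ j, Ψ i (center j) ≤ ⨆ i : Fin du, ∑ j, Ψ i (center j) :=
    le_ciSup (f := fun i => ∑ j, Ψ i (center j)) (Set.finite_range _).bddAbove i
  calc ∑ j, Ctup i j * Cup i j = ∑ j, Ψ i (center j) * Cup i j ^ 2 := by
        simp only [hCtup]; exact sum_congr rfl fun j _ => by ring
    _ ≤ (⨆ i : Fin du, ∑ j, Ψ i (center j)) * (L * √(Cuu i i * maxDiag Cuu)) ^ 2 :=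
        sum_mul_sq_le_of_abs_le (fun j => hΨnn i (center j)) hΨ_le hCup_le
    _ = L_R * Cuu i i * maxDiag Cuu := by
        rw [hL_R, mul_pow, Real.sq_sqrt (mul_nonneg (hdiag i) ((hdiag i).trans (le_maxDiag Cuu i)))]
        ring
end

section
/- Ensemble covariance lower bound (Theorem 4.5 of the paper): fix σ > 0, c_o > 0, L_R > 0 and ψ₀ > 0. Let C^{uu} : [0,∞) → ℝ^{d_u × d_u} be a continuously differentiable family of symmetric positive semidefinite matrices and C^{up}, C̃^{up} : [0,∞) → ℝ^{d_u × d_y} continuous with d/dt C^{uu}_{i,i}(t) = −2 Σ_{j=1}^{d_y} C̃^{up}_{i,j}(t) C^{up}_{i,j}(t) + σ/(t+1)² for all i and t ≥ 0. Assume: (a) observability: for all t, with i* an index where C^{uu}_{i*,i*}(t) = ‖C^{uu}(t)‖_max, Σ_j C̃^{up}_{i*,j} C^{up}_{i*,j} ≥ c_o (C^{uu}_{i*,i*})²; (b) regularity: for all t and all i, Σ_j C̃^{up}_{i,j} C^{up}_{i,j} ≤ L_R C^{uu}_{i,i}(t) ‖C^{uu}(t)‖_max; (c) the localization matrix Ψ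 ∈ ℝ^{d_u × d_u} is symmetric positive definite with λ_min(Ψ) ≥ ψ₀. Fix δ ∈ (0,1) and let M_C = (√(1 + 8 c_o σ) + 1)/(4 c_o (1 − δ)), assuming 2 L_R M_C > 1. Then there exists t₁ ≥ 0 such that for all t > t₁ and every index i, C^{uu}_{i,i}(t) ≥ m_c/(t+1), where m_c = σ(1 − δ)/(2 L_R M_C − 1); moreover λ_min(C^{uu}(t) ∘ Ψ) ≥ ψ₀ · min_i C^{uu}_{i,i}(t) ≥ ψ₀ m_c/(t+1). -/
/-!
Both bounds are barrier arguments for the diagonal entries `d_i(t) = C^{uu}_{i,i}(t)`.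
Let `r` be the positive root of `2 c_o r² - r - σ`, so `M_C = r / (1 - δ) > r`, and fix
`r < M < M_C`. At a first time where the largest diagonal entry touches `M / (t + τ)`,
observability makes it decrease faster than this barrier; hence `‖C^{uu}(t)‖_max ≤ M_C / (t + 1)`
for large `t`. Regularity then gives `d_i' ≥ -K d_i / (t + 1) + σ / (t + 1)²` with
`K = 2 L_R M_C > 1`, whose sub-solutions `m / (t + 1) - A (t + 1)^{-K}` with `(K - 1) m < σ`
stay below `d_i`; taking `m > m_c` gives the lower bound. Finally
`C ∘ Ψ - ψ₀ (min_i C_{i,i}) I = C ∘ (Ψ - ψ₀ I) + diag(ψ₀ (C_{i,i} - min_j C_{j,j}))` is positive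
semidefinite by the Schur product theorem.
-/

open Matrix

open Filter Set Topology

lemma hasDerivAt_div_add (M τ t : ℝ) (h : t + τ ≠ 0) :
    HasDerivAt (fun y => M / (y + τ)) (-M / (t + τ) ^ 2) t :=
  ((((hasDerivAt_id t).add_const τ).inv h).const_mul M).congr_deriv (by simp [div_eq_mul_inv])

lemma hasDerivAt_add_one_rpow (K t : ℝ) (h : t + 1 ≠ 0) :
    HasDerivAt (fun y => (y + 1) ^ K) (K * (t + 1) ^ (K - 1)) t := by
  simpa using ((hasDerivAt_id t).add_const 1).rpow_const (p := K) (Or.inl h)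

lemma eventually_nhdsGT_le_of_hasDerivAt {f B : ℝ → ℝ} {f' B' x : ℝ}
    (hf : HasDerivAt f f' x) (hB : HasDerivAt B B' x) (hle : f x ≤ B x)
    (hderiv : f x = B x → f' < B') : ∀ᶠ y in 𝓝[>] x, f y ≤ B y := by
  rcases hle.lt_or_eq with hlt | heq
  · exact ((hf.continuousAt.eventually_lt hB.continuousAt hlt).filter_mono
      nhdsWithin_le_nhds).mono fun _ h => h.le
  · have hslope := (hasDerivAt_iff_tendsto_slope.mp (hB.sub hf)).mono_left (nhdsGT_le_nhdsNE x)
    filter_upwards [hslope.eventually (eventually_gt_nhds (sub_pos.mpr (hderiv heq))),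
      self_mem_nhdsWithin] with y hy hxy
    exact sub_nonneg.mp (pos_of_slope_pos hxy hy (sub_eq_zero.mpr heq.symm)).le

theorem le_of_hasDerivAt_of_eq_imp_lt {ι : Type*} [Finite ι] {f f' : ι → ℝ → ℝ}
    {B B' : ℝ → ℝ} {a : ℝ}
    (hf : ∀ x ≥ a, ∀ i, HasDerivAt (f i) (f' i x) x) (hB : ∀ x ≥ a, HasDerivAt B (B' x) x)
    (ha : ∀ i, f i a ≤ B a)
    (bound : ∀ x ≥ a, ∀ i, (∀ j, f j x ≤ B x) → f i x = B x → f' i x < B' x) :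
    ∀ x ≥ a, ∀ i, f i x ≤ B x := by
  intro b hb
  set s := {x | ∀ i, f i x ≤ B x}
  have hclosed : IsClosed (s ∩ Icc a b) := by
    have := (isClosed_Icc (a := a) (b := b)).isClosed_le (f := fun x i => f i x)
      (g := fun x _ => B x)
      (continuousOn_pi.mpr fun i x hx => (hf x hx.1 i).continuousAt.continuousWithinAt)
      (continuousOn_pi.mpr fun _ x hx => (hB x hx.1).continuousAt.continuousWithinAt)
    convert this using 1
    ext x
    simp [s, Pi.le_def, and_comm]
  refine hclosed.Icc_subset_of_forall_mem_nhdsWithin ha (fun x ⟨hxs, hx⟩ => ?_) ⟨hb, le_rfl⟩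
  exact eventually_all.mpr fun i => eventually_nhdsGT_le_of_hasDerivAt (hf x hx.1 i)
    (hB x hx.1) (hxs i) (bound x hx.1 i hxs)

lemma add_lt_two_mul_sq {c σ M : ℝ} (hc : 0 < c) (hσ : 0 ≤ σ)
    (hM : (√(1 + 8 * c * σ) + 1) / (4 * c) < M) : σ + M < 2 * c * M ^ 2 := by
  have hs : √(1 + 8 * c * σ) ^ 2 = 1 + 8 * c * σ := Real.sq_sqrt (by positivity)
  have hsM : √(1 + 8 * c * σ) + 1 < 4 * c * M := (div_lt_iff₀' (by positivity)).mp hM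
  nlinarith [Real.sqrt_nonneg (1 + 8 * c * σ)]

theorem le_div_add_of_observable {ι : Type*} [Finite ι] {d S : ι → ℝ → ℝ} {σ c M τ : ℝ}
    (hσ : 0 ≤ σ) (hM : σ + M < 2 * c * M ^ 2) (hτ : 0 < τ) (hτ1 : τ ≤ 1)
    (hODE : ∀ t ≥ 0, ∀ i, HasDerivAt (d i) (-2 * S i t + σ / (t + 1) ^ 2) t)
    (hobs : ∀ t ≥ 0, ∀ i, (∀ j, d j t ≤ d i t) → c * d i t ^ 2 ≤ S i t)
    (h0 : ∀ i, d i 0 ≤ M / τ) :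
    ∀ t ≥ 0, ∀ i, d i t ≤ M / (t + τ) := by
  refine le_of_hasDerivAt_of_eq_imp_lt hODE
    (fun t (ht : 0 ≤ t) => hasDerivAt_div_add M τ t (by linarith : 0 < t + τ).ne')
    (by simpa using h0) ?_
  intro t ht i hle heq
  have hS : 2 * c * M ^ 2 / (t + τ) ^ 2 ≤ 2 * S i t := by
    have := hobs t ht i fun j => heq ▸ hle j
    rw [heq, div_pow] at this
    linarith [mul_div_assoc (2 * c) (M ^ 2) ((t + τ) ^ 2)]
  have hσ' : σ / (t + 1) ^ 2 ≤ σ / (t + τ) ^ 2 :=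
    div_le_div_of_nonneg_left hσ (by positivity) (by gcongr)
  have hMq : (σ + M) / (t + τ) ^ 2 < 2 * c * M ^ 2 / (t + τ) ^ 2 :=
    div_lt_div_of_pos_right hM (by positivity)
  rw [add_div] at hMq
  rw [neg_div]
  linarith

lemma eventually_div_add_le_div {M M' τ : ℝ} (hM : M < M') (hτ : 0 < τ) :
    ∀ᶠ t in atTop, M / (t + τ) ≤ M' / (t + 1) := by
  filter_upwards [eventually_ge_atTop 0, eventually_ge_atTop ((M - M' * τ) / (M' - M))]
    with t ht₀ ht
  rw [div_le_div_iff₀ (by positivity) (by positivity)]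
  rw [div_le_iff₀ (sub_pos.mpr hM)] at ht
  linarith

theorem eventually_le_div_of_observable {ι : Type*} [Finite ι] {d S : ι → ℝ → ℝ}
    {σ c M_C : ℝ} (hσ : 0 ≤ σ) (hc : 0 < c) (hM_C : (√(1 + 8 * c * σ) + 1) / (4 * c) < M_C)
    (hODE : ∀ t ≥ 0, ∀ i, HasDerivAt (d i) (-2 * S i t + σ / (t + 1) ^ 2) t)
    (hobs : ∀ t ≥ 0, ∀ i, (∀ j, d j t ≤ d i t) → c * d i t ^ 2 ≤ S i t) :
    ∀ᶠ t in atTop, ∀ i, d i t ≤ M_C / (t + 1) := by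
  obtain ⟨M, hrM, hMM_C⟩ := exists_between hM_C
  have hM : 0 < M := lt_trans (by positivity) hrM
  obtain ⟨D, hD⟩ := (finite_range fun i => d i 0).bddAbove
  set τ := M / (max D 0 + M)
  have hτ : 0 < τ := by positivity
  have hupper := le_div_add_of_observable hσ (add_lt_two_mul_sq hc hσ hrM) hτ
    (div_le_one_of_le₀ (by linarith [le_max_right D 0]) (by positivity)) hODE hobs fun i => by
      rw [div_div_cancel₀ hM.ne']
      linarith [hD ⟨i, rfl⟩, le_max_left D 0]
  filter_upwards [eventually_ge_atTop 0, eventually_div_add_le_div hMM_C hτ] with t ht hle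
  exact fun i => (hupper t ht i).trans hle

/-- `m / (t + 1) - A (t + 1)^{-K}` solves `b' = -K b / (t + 1) + (K - 1) m / (t + 1)²`, so it is
a strict sub-solution of `d' ≥ -K d / (t + 1) + σ / (t + 1)²` when `(K - 1) m < σ`. -/
theorem sub_rpow_le_of_coupling_le {d S : ℝ → ℝ} {σ K m A t₀ : ℝ} (ht₀ : -1 < t₀)
    (hm : (K - 1) * m < σ)
    (hODE : ∀ t ≥ t₀, HasDerivAt d (-2 * S t + σ / (t + 1) ^ 2) t)
    (hS : ∀ t ≥ t₀, 2 * S t ≤ K * d t / (t + 1))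
    (h0 : m / (t₀ + 1) - A * (t₀ + 1) ^ (-K) ≤ d t₀) :
    ∀ t ≥ t₀, m / (t + 1) - A * (t + 1) ^ (-K) ≤ d t := by
  set b := fun t => m / (t + 1) - A * (t + 1) ^ (-K)
  have hb : ∀ t ≥ t₀, HasDerivAt b (-m / (t + 1) ^ 2 - A * (-K * (t + 1) ^ (-K - 1))) t :=
    fun t (ht : t₀ ≤ t) => (hasDerivAt_div_add m 1 t (by linarith : 0 < t + 1).ne').sub
      ((hasDerivAt_add_one_rpow (-K) t (by linarith : 0 < t + 1).ne').const_mul A)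
  intro t ht
  refine image_le_of_deriv_right_lt_deriv_boundary'
    (fun x hx => (hb x hx.1).continuousAt.continuousWithinAt)
    (fun x hx => (hb x hx.1).hasDerivWithinAt) h0
    (fun x hx => (hODE x hx.1).continuousAt.continuousWithinAt)
    (fun x hx => (hODE x hx.1).hasDerivWithinAt) ?_ ⟨ht, le_rfl⟩
  intro x ⟨hx, _⟩ heq
  have hx1 : 0 < x + 1 := by linarith
  have hS' := hS x hx
  rw [← heq] at hS'
  have hcoupling : K * b x / (x + 1) = K * m / (x + 1) ^ 2 - A * (K * (x + 1) ^ (-K - 1)) := by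
    simp only [b, Real.rpow_sub_one hx1.ne']
    field_simp
  have hgap : K * m / (x + 1) ^ 2 < σ / (x + 1) ^ 2 + m / (x + 1) ^ 2 := by
    rw [← add_div]
    exact div_lt_div_of_pos_right (by linarith) (by positivity)
  rw [neg_div]
  linarith

lemma eventually_div_le_div_sub_rpow {m m' A K : ℝ} (hK : 1 < K) (hm : m' < m) :
    ∀ᶠ t in atTop, m' / (t + 1) ≤ m / (t + 1) - A * (t + 1) ^ (-K) := by
  have hgrow : Tendsto (fun t : ℝ => (t + 1) ^ (K - 1)) atTop atTop :=
    (tendsto_rpow_atTop (by linarith)).comp (tendsto_atTop_add_const_right _ 1 tendsto_id)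
  filter_upwards [eventually_ge_atTop 0, hgrow.eventually_ge_atTop (A / (m - m'))]
    with t ht₀ ht
  have ht1 : 0 < t + 1 := by linarith
  set X := (t + 1) ^ (K - 1)
  have hX : 0 < X := Real.rpow_pos_of_pos ht1 _
  have hpow : (t + 1) ^ (-K) = X⁻¹ / (t + 1) := by
    rw [Real.rpow_neg ht1.le, show X = (t + 1) ^ K / (t + 1) from Real.rpow_sub_one ht1.ne' K]
    field_simp
  have hA : A * X⁻¹ ≤ m - m' := by
    rw [← div_eq_mul_inv, div_le_iff₀ hX, mul_comm]
    exact (div_le_iff₀ (sub_pos.mpr hm)).mp ht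
  rw [hpow, ← sub_nonneg]
  have hsplit : m / (t + 1) - A * (X⁻¹ / (t + 1)) - m' / (t + 1)
      = (m - m' - A * X⁻¹) / (t + 1) := by ring
  rw [hsplit]
  exact div_nonneg (by linarith) ht1.le

theorem eventually_div_le_of_coupling_le {d S : ℝ → ℝ} {σ L M m t₀ : ℝ} (ht₀ : -1 < t₀)
    (hK : 1 < 2 * L * M) (hm : (2 * L * M - 1) * m < σ)
    (hODE : ∀ t ≥ t₀, HasDerivAt d (-2 * S t + σ / (t + 1) ^ 2) t)
    (hS : ∀ t ≥ t₀, S t ≤ L * d t * (M / (t + 1))) (h0 : 0 ≤ d t₀) :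
    ∀ᶠ t in atTop, m / (t + 1) ≤ d t := by
  set K := 2 * L * M
  have hS' : ∀ t ≥ t₀, 2 * S t ≤ K * d t / (t + 1) := fun t ht => by
    linarith [hS t ht, show K * d t / (t + 1) = 2 * (L * d t * (M / (t + 1))) by ring]
  obtain ⟨m', hmm', hm'⟩ : ∃ m', m < m' ∧ m' < σ / (K - 1) :=
    exists_between ((lt_div_iff₀' (by linarith)).mpr hm)
  set A := m' / (t₀ + 1) * (t₀ + 1) ^ K
  have hA : m' / (t₀ + 1) - A * (t₀ + 1) ^ (-K) = 0 := by
    rw [mul_assoc, ← Real.rpow_add (by linarith), add_neg_cancel, Real.rpow_zero, mul_one,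
      sub_self]
  have hlower := sub_rpow_le_of_coupling_le ht₀ ((lt_div_iff₀' (by linarith)).mp hm') hODE hS'
    (hA.trans_le h0)
  filter_upwards [eventually_ge_atTop t₀, eventually_div_le_div_sub_rpow (A := A) hK hmm']
    with t ht hb
  exact hb.trans (hlower t ht)

theorem Matrix.PosSemidef.hadamard_sub_smul_one {n : Type*} [Fintype n] [DecidableEq n]
    {A P : Matrix n n ℝ} {c : ℝ} (hA : A.PosSemidef) (hP : (P - c • 1).PosSemidef)
    (hc : 0 ≤ c) : (A ⊙ P - (c * ⨅ i, A i i) • 1).PosSemidef := by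
  have hsplit : A ⊙ P - (c * ⨅ i, A i i) • 1
      = A ⊙ (P - c • 1) + diagonal fun i => c * (A i i - ⨅ j, A j j) := by
    ext i j
    rcases eq_or_ne i j with rfl | hij
    · simp only [sub_apply, hadamard_apply, smul_apply, one_apply_eq, smul_eq_mul, mul_one,
        add_apply, diagonal_apply_eq]
      ring
    · simp [hij]
  rw [hsplit]
  refine (hA.hadamard hP).add (PosSemidef.diagonal fun i => mul_nonneg hc (sub_nonneg.mpr ?_))
  exact ciInf_le (finite_range _).bddBelow i

theorem ensemble_covariance_lower_bound_general {du dy : ℕ} (hdu : 0 < du)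
    (σ c_o L_R ψ₀ : ℝ) (hσ : 0 < σ) (hc_o : 0 < c_o) (hL_R : 0 < L_R) (hψ₀ : 0 < ψ₀)
    (Cuu : ℝ → Matrix (Fin du) (Fin du) ℝ)
    (Cup Ctup : ℝ → Matrix (Fin du) (Fin dy) ℝ)
    (hpsd : ∀ t, 0 ≤ t → (Cuu t).PosSemidef)
    (hODE : ∀ t, 0 ≤ t → ∀ i,
      HasDerivAt (fun s => Cuu s i i)
        (-2 * ∑ j, Ctup t i j * Cup t i j + σ / (t + 1) ^ 2) t)
    (hobs : ∀ t, 0 ≤ t → ∀ istar : Fin du,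
      (∀ i, Cuu t i i ≤ Cuu t istar istar) →
      c_o * Cuu t istar istar ^ 2 ≤ ∑ j, Ctup t istar j * Cup t istar j)
    (hreg : ∀ t, 0 ≤ t → ∀ i,
      ∑ j, Ctup t i j * Cup t i j ≤ L_R * Cuu t i i * maxDiag (Cuu t))
    (Ψ : Matrix (Fin du) (Fin du) ℝ)
    (hΨmin : (Ψ - ψ₀ • (1 : Matrix (Fin du) (Fin du) ℝ)).PosSemidef)
    (δ : ℝ) (hδ : 0 < δ) (hδ' : δ < 1)
    (M_C : ℝ) (hM_C : M_C = (Real.sqrt (1 + 8 * c_o * σ) + 1) / (4 * c_o * (1 - δ)))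
    (hMC1 : 1 < 2 * L_R * M_C)
    (m_c : ℝ) (hm_c : m_c = σ * (1 - δ) / (2 * L_R * M_C - 1)) :
    ∃ t₁ : ℝ, 0 ≤ t₁ ∧ ∀ t, t₁ < t →
      (∀ i, m_c / (t + 1) ≤ Cuu t i i) ∧
      ((Cuu t).hadamard Ψ -
          (ψ₀ * ⨅ i, Cuu t i i) • (1 : Matrix (Fin du) (Fin du) ℝ)).PosSemidef ∧
      ψ₀ * m_c / (t + 1) ≤ ψ₀ * ⨅ i, Cuu t i i := by
  have h1δ : 0 < 1 - δ := by linarith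
  have hrM_C : (√(1 + 8 * c_o * σ) + 1) / (4 * c_o) < M_C := by
    rw [hM_C, ← div_div _ (4 * c_o), lt_div_iff₀ h1δ]
    nlinarith [(by positivity : 0 < (√(1 + 8 * c_o * σ) + 1) / (4 * c_o))]
  have hdiag : ∀ t ≥ 0, ∀ i, 0 ≤ Cuu t i i := fun t ht i => (hpsd t ht).diag_nonneg
  obtain ⟨t₀, ht₀⟩ := ((eventually_le_div_of_observable (d := fun i t => Cuu t i i)
    hσ.le hc_o hrM_C hODE hobs).and (eventually_ge_atTop 0)).exists_forall_of_atTop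
  have ht₀0 : 0 ≤ t₀ := (ht₀ t₀ le_rfl).2
  have hcoupling : ∀ i, ∀ t ≥ t₀,
      ∑ j, Ctup t i j * Cup t i j ≤ L_R * Cuu t i i * (M_C / (t + 1)) := fun i t ht => by
    have hM_C0 : 0 ≤ M_C := by linarith [hrM_C.trans' (by positivity)]
    have hmax : maxDiag (Cuu t) ≤ M_C / (t + 1) :=
      Real.iSup_le (ht₀ t ht).1 (div_nonneg hM_C0 (by linarith))
    have ht0 := ht₀0.trans ht
    exact (hreg t ht0 i).trans
      (mul_le_mul_of_nonneg_left hmax (mul_nonneg hL_R.le (hdiag t ht0 i)))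
  have hm_c' : (2 * L_R * M_C - 1) * m_c < σ := by
    rw [hm_c, mul_div_cancel₀ _ (by linarith)]
    nlinarith
  have hev := eventually_all.mpr fun i => eventually_div_le_of_coupling_le (by linarith) hMC1
    hm_c' (fun t ht => hODE t (ht₀0.trans ht) i) (hcoupling i) (hdiag t₀ ht₀0 i)
  obtain ⟨T, hT⟩ := (hev.and (eventually_ge_atTop 0)).exists_forall_of_atTop
  refine ⟨max T 0, le_max_right _ _, fun t ht => ?_⟩
  obtain ⟨hdiag_t, ht0⟩ := hT t ((le_max_left _ _).trans ht.le)
  have : Nonempty (Fin du) := Fin.pos_iff_nonempty.mp hdu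
  refine ⟨hdiag_t, (hpsd t ht0).hadamard_sub_smul_one hΨmin hψ₀.le, ?_⟩
  rw [mul_div_assoc]
  exact mul_le_mul_of_nonneg_left (le_ciInf hdiag_t) hψ₀.le

/-- **Ensemble covariance lower bound** (Theorem 4.5 of the paper).
Under observability, regularity and a positive definite localization matrix `Ψ` with
`λ_min(Ψ) ≥ ψ₀` (expressed as `Ψ - ψ₀ I ⪰ 0`), the diagonal entries of the ensemble
covariance decay at most like `m_c/(t+1)`, and the smallest eigenvalue of the localized
covariance `C^{uu} ∘ Ψ` is at least `ψ₀ min_i C^{uu}_{i,i} ≥ ψ₀ m_c/(t+1)` (the eigenvalue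
bounds being expressed via positive semidefiniteness of the shifted matrices). -/
theorem ensemble_covariance_lower_bound {du dy : ℕ} (hdu : 0 < du)
    (σ c_o L_R ψ₀ : ℝ) (hσ : 0 < σ) (hc_o : 0 < c_o) (hL_R : 0 < L_R) (hψ₀ : 0 < ψ₀)
    (Cuu : ℝ → Matrix (Fin du) (Fin du) ℝ)
    (Cup Ctup : ℝ → Matrix (Fin du) (Fin dy) ℝ)
    (hpsd : ∀ t, 0 ≤ t → (Cuu t).PosSemidef)
    (hCupCont : ContinuousOn Cup (Set.Ici (0 : ℝ)))
    (hCtupCont : ContinuousOn Ctup (Set.Ici (0 : ℝ)))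
    (hODE : ∀ t, 0 ≤ t → ∀ i,
      HasDerivAt (fun s => Cuu s i i)
        (-2 * ∑ j, Ctup t i j * Cup t i j + σ / (t + 1) ^ 2) t)
    (hobs : ∀ t, 0 ≤ t → ∀ istar : Fin du,
      (∀ i, Cuu t i i ≤ Cuu t istar istar) →
      c_o * Cuu t istar istar ^ 2 ≤ ∑ j, Ctup t istar j * Cup t istar j)
    (hreg : ∀ t, 0 ≤ t → ∀ i,
      ∑ j, Ctup t i j * Cup t i j ≤ L_R * Cuu t i i * maxDiag (Cuu t))
    (Ψ : Matrix (Fin du) (Fin du) ℝ) (hΨ : Ψ.PosDef)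
    (hΨmin : (Ψ - ψ₀ • (1 : Matrix (Fin du) (Fin du) ℝ)).PosSemidef)
    (δ : ℝ) (hδ : 0 < δ) (hδ' : δ < 1)
    (M_C : ℝ) (hM_C : M_C = (Real.sqrt (1 + 8 * c_o * σ) + 1) / (4 * c_o * (1 - δ)))
    (hMC1 : 1 < 2 * L_R * M_C)
    (m_c : ℝ) (hm_c : m_c = σ * (1 - δ) / (2 * L_R * M_C - 1)) :
    ∃ t₁ : ℝ, 0 ≤ t₁ ∧ ∀ t, t₁ < t →
      (∀ i, m_c / (t + 1) ≤ Cuu t i i) ∧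
      ((Cuu t).hadamard Ψ -
          (ψ₀ * ⨅ i, Cuu t i i) • (1 : Matrix (Fin du) (Fin du) ℝ)).PosSemidef ∧
      ψ₀ * m_c / (t + 1) ≤ ψ₀ * ⨅ i, Cuu t i i :=
  ensemble_covariance_lower_bound_general hdu σ c_o L_R ψ₀ hσ hc_o hL_R hψ₀ Cuu Cup Ctup hpsd hODE
    hobs hreg Ψ hΨmin δ hδ hδ' M_C hM_C hMC1 m_c hm_c
end

section
/- Comparison principle for the running maximum (Lemma A.2 of the paper): let x₁, …, x_n : [0,∞) → ℝ be continuously differentiable functions, and for each t let m_t = max_{1 ≤ i ≤ n} x_i(t) and let i_t be the smallest index i with x_i(t) = m_t. Let g : ℝ × [0,∞) → ℝ be continuous and suppose that for every t ≥ 0, the derivative satisfies (d/dt)x_{i_t}(t) ≤ g(x_{i_t}(t), t). Fix δ₀ > 0 and let y : [0,∞) → ℝ solve (d/dt)y_t = g(y_t, t) + δ₀ with y₀ > m₀. Then y_t > m_t for all t > 0. -/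
/-!
Let `T` be the first time at which `y` meets the running maximum, and let `i` be the smallest
index attaining the maximum at `T`, so that `x i T = y T` while `x i < y` on `[0, T)`. Then
`y - x i` drops to its minimum `0` from the left at `T`, so its derivative there is `≤ 0`;
but by the hypothesis on the leading coordinate that derivative is at least `δ₀ > 0`.
-/

open Set Filter Topology

theorem continuous_ciSup_of_finite {ι X α : Type*} [Fintype ι] [Nonempty ι] [TopologicalSpace X]
    [ConditionallyCompleteLinearOrder α] [TopologicalSpace α] [OrderTopology α]
    {f : ι → X → α} (hf : ∀ i, Continuous (f i)) : Continuous fun x => ⨆ i, f i x := by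
  simpa only [← Finset.sup'_univ_eq_ciSup] using
    Continuous.finset_sup'_apply Finset.univ_nonempty fun i _ => hf i

theorem exists_least_argmax {ι α : Type*} [Fintype ι] [Nonempty ι] [LinearOrder ι]
    [LinearOrder α] (f : ι → α) : ∃ i, (∀ j, f j ≤ f i) ∧ ∀ j, f j = f i → i ≤ j := by
  classical
  let s := Finset.univ.filter fun i => ∀ j, f j ≤ f i
  obtain ⟨k, -, hk⟩ := Finset.exists_max_image Finset.univ f Finset.univ_nonempty
  have hs : s.Nonempty := ⟨k, by simpa [s] using fun j => hk j (Finset.mem_univ j)⟩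
  have hmax : ∀ j, f j ≤ f (s.min' hs) := by simpa [s] using s.min'_mem hs
  refine ⟨s.min' hs, hmax, fun j hj => s.min'_le j ?_⟩
  simpa [s, hj] using hmax

theorem HasDerivWithinAt.nonpos_of_eventually_le_left {f : ℝ → ℝ} {f' a : ℝ}
    (hf : HasDerivWithinAt f f' (Iio a) a) (h : ∀ᶠ t in 𝓝[<] a, f a ≤ f t) : f' ≤ 0 := by
  refine le_of_tendsto (hasDerivWithinAt_iff_tendsto_slope' self_notMem_Iio |>.1 hf) ?_
  filter_upwards [h, self_mem_nhdsWithin] with t hle (hlt : t < a)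
  rw [slope_def_field]
  exact div_nonpos_of_nonneg_of_nonpos (sub_nonneg.2 hle) (sub_nonpos.2 hlt.le)

theorem exists_first_zero_of_pos_of_nonpos {u : ℝ → ℝ} {a b : ℝ} (hab : a ≤ b)
    (hu : ContinuousOn u (Icc a b)) (ha : 0 < u a) (hb : u b ≤ 0) :
    ∃ c ∈ Ioc a b, u c = 0 ∧ ∀ t ∈ Ico a c, 0 < u t := by
  let S := Icc a b ∩ u ⁻¹' Iic 0
  have hS : IsClosed S := hu.preimage_isClosed_of_isClosed isClosed_Icc isClosed_Iic
  have hSne : S.Nonempty := ⟨b, ⟨⟨hab, le_rfl⟩, hb⟩⟩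
  have hSbdd : BddBelow S := ⟨a, fun t ht => ht.1.1⟩
  obtain ⟨c, ⟨⟨hac, hcb⟩, hc⟩, hcmin⟩ : ∃ c ∈ S, ∀ t ∈ S, c ≤ t :=
    ⟨sInf S, hS.csInf_mem hSne hSbdd, fun t ht => csInf_le hSbdd ht⟩
  have hbefore : ∀ t ∈ Ico a c, 0 < u t := fun t ht => by
    by_contra! hle
    exact (hcmin t ⟨⟨ht.1, ht.2.le.trans hcb⟩, hle⟩).not_gt ht.2
  -- a zero of `u` on `[a, c]` (intermediate value theorem) cannot lie before `c`
  obtain ⟨z, hz, hz0⟩ :=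
    intermediate_value_Icc' hac (hu.mono (Icc_subset_Icc_right hcb)) ⟨hc, ha.le⟩
  have hzc : z = c := le_antisymm hz.2 (hcmin z ⟨⟨hz.1, hz.2.trans hcb⟩, hz0.le⟩)
  refine ⟨c, ⟨hac.lt_of_ne ?_, hcb⟩, hzc ▸ hz0, hbefore⟩
  rintro rfl
  exact hc.not_gt ha

theorem comparison_principle_running_max_general {n : ℕ} (hn : 0 < n)
    (x : Fin n → ℝ → ℝ) (hx : ∀ i, ContDiff ℝ 1 (x i))
    (g : ℝ → ℝ → ℝ)
    (hbound : ∀ t, 0 ≤ t → ∀ i : Fin n,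
      (∀ i', x i' t ≤ x i t) → (∀ i' : Fin n, x i' t = x i t → i ≤ i') →
      deriv (x i) t ≤ g (x i t) t)
    (δ₀ : ℝ) (hδ₀ : 0 < δ₀)
    (y : ℝ → ℝ) (hy : ∀ t, 0 ≤ t → HasDerivAt y (g (y t) t + δ₀) t)
    (hy0 : (⨆ i, x i 0) < y 0) :
    ∀ t, 0 < t → (⨆ i, x i t) < y t := by
  have : Nonempty (Fin n) := ⟨⟨0, hn⟩⟩
  intro t₀ ht₀
  by_contra! hle
  have hy_cont : ContinuousOn y (Icc 0 t₀) := fun t ht =>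
    (hy t ht.1).continuousAt.continuousWithinAt
  have hgap : ContinuousOn (fun t => y t - ⨆ i, x i t) (Icc 0 t₀) :=
    hy_cont.sub (continuous_ciSup_of_finite fun i => (hx i).continuous).continuousOn
  obtain ⟨T, ⟨hT, -⟩, hmeet, hbefore⟩ :=
    exists_first_zero_of_pos_of_nonpos ht₀.le hgap (sub_pos.2 hy0) (sub_nonpos.2 hle)
  obtain ⟨i, hmax, hleast⟩ := exists_least_argmax (x · T)
  have hxi : x i T = y T := by
    linarith [le_antisymm (ciSup_le hmax) (le_ciSup (Finite.bddAbove_range (x · T)) i)]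
  have hderiv : HasDerivAt (fun t => y t - x i t) (g (y T) T + δ₀ - deriv (x i) T) T :=
    (hy T hT.le).sub ((hx i).differentiable one_ne_zero T).hasDerivAt
  have hmin : ∀ᶠ t in 𝓝[<] T, y T - x i T ≤ y t - x i t := by
    filter_upwards [Ico_mem_nhdsLT hT] with t ht
    linarith [hbefore t ht, le_ciSup (Finite.bddAbove_range (x · t)) i]
  have hnonpos := hderiv.hasDerivWithinAt.nonpos_of_eventually_le_left hmin
  have hlead := hbound T hT.le i hmax hleast
  rw [hxi] at hlead
  linarith

/-- **Comparison principle for the running maximum** (Lemma A.2 of the paper).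
If, at every time `t ≥ 0`, the derivative of the coordinate attaining the running maximum
(with ties broken by the smallest index) is bounded by `g(x_{i_t}(t), t)`, and `y` is a
strict supersolution `y' = g(y,t) + δ₀` with `y₀ > max_i x_i(0)`, then `y` dominates the
running maximum for all positive times. -/
theorem comparison_principle_running_max {n : ℕ} (hn : 0 < n)
    (x : Fin n → ℝ → ℝ) (hx : ∀ i, ContDiff ℝ 1 (x i))
    (g : ℝ → ℝ → ℝ) (hg : Continuous fun p : ℝ × ℝ => g p.1 p.2)
    (hbound : ∀ t, 0 ≤ t → ∀ i : Fin n,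
      (∀ i', x i' t ≤ x i t) → (∀ i' : Fin n, x i' t = x i t → i ≤ i') →
      deriv (x i) t ≤ g (x i t) t)
    (δ₀ : ℝ) (hδ₀ : 0 < δ₀)
    (y : ℝ → ℝ) (hy : ∀ t, 0 ≤ t → HasDerivAt y (g (y t) t + δ₀) t)
    (hy0 : (⨆ i, x i 0) < y 0) :
    ∀ t, 0 < t → (⨆ i, x i t) < y t :=
  comparison_principle_running_max_general hn x hx g hbound δ₀ hδ₀ y hy hy0
end

section
/- Riccati equation solution and decay (Lemma A.3 of the paper): fix a > 0, b ∈ ℝ and σ ≥ 0, and let c₋ < c₊ be the two real roots of the quadratic c² + c − bc = aσ. For a constant B, define y_t = [c₋(t+1)^{−c₋} + B c₊(t+1)^{−c₊}] / ( −a [ (t+1)^{1−c₋} + B (t+1)^{1−c₊} ] ) for those t ≥ 0 where the denominator is nonzero. Then y solves the Riccati equation dy/dt = −a y² − (b/(t+1)) y + σ/(t+1)² on its domain. Moreover: (1) if σ > 0 and b = 0 then c₋ < 0 < c₊, and for a solution with B ≥ 0, for every δ ∈ (0,1) there is t₀ such that for all t ≥ t₀, y_t ≤ c₋ / (−a (t+1)(1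 − δ)) = (−c₋)/(a(1−δ)(t+1)); (2) if σ = 0 and b = 0 then c₋ = −1 and c₊ = 0. -/
/-!
In `s = t + 1` the Riccati substitution `y = w' / (a w)` turns the equation into the Euler
equation `s² w'' + b s w' = aσ w`, solved by `s ^ (-c)` exactly when `c² + c - bc = aσ`; the
given `y` comes from `w = s ^ (-cm) + B s ^ (-cp)`. Written out, `a s y` is minus a weighted mean
of `cm` and `cp` with weights `s ^ (-cm)` and `B s ^ (-cp)`, hence at most `-cm` when `B ≥ 0`;
this gives the decay bound already from `t₀ = 0`. The statements about the roots are Vieta's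
formulas.
-/

open Filter Topology

theorem add_eq_neg_of_quadratic_roots {R : Type*} [CommRing R] [IsDomain R] {p q r₁ r₂ : R}
    (h₁ : r₁ ^ 2 + p * r₁ = q) (h₂ : r₂ ^ 2 + p * r₂ = q) (hne : r₁ ≠ r₂) :
    r₁ + r₂ = -p := by
  have h : (r₁ - r₂) * (r₁ + r₂ + p) = 0 := by linear_combination h₁ - h₂
  linear_combination (mul_eq_zero.mp h).resolve_left (sub_ne_zero.mpr hne)

theorem mul_eq_neg_of_quadratic_roots {R : Type*} [CommRing R] [IsDomain R] {p q r₁ r₂ : R}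
    (h₁ : r₁ ^ 2 + p * r₁ = q) (h₂ : r₂ ^ 2 + p * r₂ = q) (hne : r₁ ≠ r₂) :
    r₁ * r₂ = -q := by
  linear_combination r₁ * add_eq_neg_of_quadratic_roots h₁ h₂ hne - h₁

theorem rpow_one_sub_eq_rpow_neg_mul {x : ℝ} (hx : x ≠ 0) (c : ℝ) :
    x ^ (1 - c) = x ^ (-c) * x := by
  rw [← Real.rpow_add_one hx, neg_add_eq_sub]

theorem hasDerivAt_riccati_substitution {w w' : ℝ → ℝ} {w'' a x : ℝ} (ha : a ≠ 0)
    (hw : HasDerivAt w (w' x) x) (hw' : HasDerivAt w' w'' x) (hwx : w x ≠ 0) :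
    HasDerivAt (fun s => w' s / (a * w s))
      (-a * (w' x / (a * w x)) ^ 2 + w'' / (a * w x)) x := by
  refine (hw'.div (hw.const_mul a) (mul_ne_zero ha hwx)).congr_deriv ?_
  field_simp
  ring

theorem euler_equation_rpow_neg {b k c x : ℝ} (hc : c ^ 2 + c - b * c = k) (hx : x ≠ 0) :
    x ^ 2 * ((-c) * (-c - 1) * x ^ (-c - 1 - 1)) + b * x * (-c * x ^ (-c - 1)) = k * x ^ (-c) := by
  rw [Real.rpow_sub_one hx, Real.rpow_sub_one hx]
  field_simp
  linear_combination x ^ (-c) * hc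

/-- The `y` of the theorem as a function of `s = t + 1`. -/
noncomputable def riccatiSolution (a B cm cp s : ℝ) : ℝ :=
  (cm * s ^ (-cm) + B * cp * s ^ (-cp)) / (-a * (s ^ (1 - cm) + B * s ^ (1 - cp)))

theorem riccatiSolution_eq_substitution {a B cm cp s : ℝ} (hs : s ≠ 0) :
    riccatiSolution a B cm cp s =
      (-cm * s ^ (-cm - 1) + B * (-cp * s ^ (-cp - 1))) / (a * (s ^ (-cm) + B * s ^ (-cp))) := by
  rw [riccatiSolution, rpow_one_sub_eq_rpow_neg_mul hs, rpow_one_sub_eq_rpow_neg_mul hs,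
    Real.rpow_sub_one hs, Real.rpow_sub_one hs,
    show -a * (s ^ (-cm) * s + B * (s ^ (-cp) * s)) = a * (s ^ (-cm) + B * s ^ (-cp)) * -s by ring,
    ← div_div]
  ring

theorem hasDerivAt_riccatiSolution {a b σ B cm cp x : ℝ} (ha : a ≠ 0)
    (hcm : cm ^ 2 + cm - b * cm = a * σ) (hcp : cp ^ 2 + cp - b * cp = a * σ) (hx : x ≠ 0)
    (hden : x ^ (1 - cm) + B * x ^ (1 - cp) ≠ 0) :
    HasDerivAt (riccatiSolution a B cm cp)
      (-a * riccatiSolution a B cm cp x ^ 2 - b / x * riccatiSolution a B cm cp x +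
        σ / x ^ 2) x := by
  have hpow (p : ℝ) : HasDerivAt (fun s : ℝ => s ^ p) (p * x ^ (p - 1)) x :=
    Real.hasDerivAt_rpow_const (.inl hx)
  have hw : HasDerivAt (fun s => s ^ (-cm) + B * s ^ (-cp))
      (-cm * x ^ (-cm - 1) + B * (-cp * x ^ (-cp - 1))) x :=
    (hpow _).add ((hpow _).const_mul B)
  have hw' : HasDerivAt (fun s => -cm * s ^ (-cm - 1) + B * (-cp * s ^ (-cp - 1)))
      (-cm * ((-cm - 1) * x ^ (-cm - 1 - 1)) + B * (-cp * ((-cp - 1) * x ^ (-cp - 1 - 1)))) x :=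
    ((hpow _).const_mul _).add (((hpow _).const_mul _).const_mul B)
  have hwx : x ^ (-cm) + B * x ^ (-cp) ≠ 0 := by
    rw [rpow_one_sub_eq_rpow_neg_mul hx, rpow_one_sub_eq_rpow_neg_mul hx] at hden
    exact fun h => hden (by linear_combination x * h)
  have heq : riccatiSolution a B cm cp =ᶠ[𝓝 x] fun s =>
      (-cm * s ^ (-cm - 1) + B * (-cp * s ^ (-cp - 1))) / (a * (s ^ (-cm) + B * s ^ (-cp))) :=
    (eventually_ne_nhds hx).mono fun s hs => riccatiSolution_eq_substitution hs
  refine ((hasDerivAt_riccati_substitution ha hw hw' hwx).congr_of_eventuallyEq heq).congr_deriv ?_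
  rw [heq.eq_of_nhds]
  have euler := euler_equation_rpow_neg hcm hx
  have euler' := euler_equation_rpow_neg hcp hx
  field_simp
  linear_combination (x ^ (-cm) + B * x ^ (-cp)) * (euler + B * euler')

theorem riccatiSolution_le {a B cm cp s : ℝ} (ha : 0 < a) (hs : 0 < s) (hB : 0 ≤ B)
    (hc : cm ≤ cp) : riccatiSolution a B cm cp s ≤ -cm / (a * s) := by
  have hP := Real.rpow_pos_of_pos hs (-cm)
  have hQ := Real.rpow_pos_of_pos hs (-cp)
  have has := mul_pos ha hs
  rw [riccatiSolution, rpow_one_sub_eq_rpow_neg_mul hs.ne', rpow_one_sub_eq_rpow_neg_mul hs.ne',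
    show -a * (s ^ (-cm) * s + B * (s ^ (-cp) * s)) =
      -(a * s * (s ^ (-cm) + B * s ^ (-cp))) by ring,
    div_neg, ← neg_div, div_le_div_iff₀ (by positivity) has]
  have hgap : 0 ≤ a * s * (B * s ^ (-cp) * (cp - cm)) := by
    have := sub_nonneg.mpr hc
    positivity
  linear_combination hgap

theorem riccati_solution_and_decay_general (a b σ : ℝ) (ha : 0 < a)
    (cm cp : ℝ)
    (hcm : cm ^ 2 + cm - b * cm = a * σ)
    (hcp : cp ^ 2 + cp - b * cp = a * σ)
    (hlt : cm < cp)
    (B : ℝ) (y : ℝ → ℝ)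
    (hy : ∀ t : ℝ, y t =
      (cm * (t + 1) ^ (-cm) + B * cp * (t + 1) ^ (-cp)) /
        (-a * ((t + 1) ^ (1 - cm) + B * (t + 1) ^ (1 - cp)))) :
    (∀ t : ℝ, 0 ≤ t → (t + 1) ^ (1 - cm) + B * (t + 1) ^ (1 - cp) ≠ 0 →
      HasDerivAt y (-a * y t ^ 2 - b / (t + 1) * y t + σ / (t + 1) ^ 2) t) ∧
    (0 < σ → b = 0 →
      (cm < 0 ∧ 0 < cp) ∧
      (0 ≤ B → ∀ δ : ℝ, 0 < δ → δ < 1 →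
        ∃ t₀ : ℝ, ∀ t, t₀ ≤ t → y t ≤ cm / (-a * (t + 1) * (1 - δ)))) ∧
    (σ = 0 → b = 0 → cm = -1 ∧ cp = 0) := by
  have hy' : y = fun t => riccatiSolution a B cm cp (t + 1) := funext hy
  subst hy'
  have hm : cm ^ 2 + (1 - b) * cm = a * σ := by linear_combination hcm
  have hp : cp ^ 2 + (1 - b) * cp = a * σ := by linear_combination hcp
  have hsum := add_eq_neg_of_quadratic_roots hm hp hlt.ne
  have hprod := mul_eq_neg_of_quadratic_roots hm hp hlt.ne
  refine ⟨fun t ht hden => ?_, fun hσ hb => ?_, fun hσ hb => ?_⟩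
  · exact (hasDerivAt_riccatiSolution ha.ne' hcm hcp (by positivity) hden).comp_add_const t 1
  · have hsign : cm < 0 ∧ 0 < cp := by
      rcases mul_neg_iff.mp (hprod.trans_lt (neg_neg_of_pos (mul_pos ha hσ))) with h | h
      · exact absurd (h.1.trans (hlt.trans h.2)) (lt_irrefl 0)
      · exact h
    refine ⟨hsign, fun hB δ _ hδ1 => ⟨0, fun t ht => ?_⟩⟩
    have hs : 0 < t + 1 := by linarith
    calc riccatiSolution a B cm cp (t + 1) ≤ -cm / (a * (t + 1)) :=
          riccatiSolution_le ha hs hB hlt.le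
      _ ≤ -cm / (a * (t + 1) * (1 - δ)) :=
          div_le_div_of_nonneg_left (neg_nonneg.mpr hsign.1.le)
            (mul_pos (mul_pos ha hs) (sub_pos.mpr hδ1))
            (mul_le_of_le_one_right (by positivity) (by linarith))
      _ = cm / (-a * (t + 1) * (1 - δ)) := by rw [neg_mul, neg_mul, div_neg, neg_div]
  · subst hσ hb
    have hzero : cm = 0 ∨ cp = 0 := by simpa using hprod
    rcases hzero with h | h
    · linarith
    · constructor <;> linarith

/-- **Riccati equation solution and decay** (Lemma A.3 of the paper).
With `cm < cp` the real roots of `c² + c - bc = aσ` and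
`y_t = (cm(t+1)^{-cm} + B cp (t+1)^{-cp}) / (-a((t+1)^{1-cm} + B(t+1)^{1-cp}))`,
`y` solves the Riccati equation `y' = -a y² - (b/(t+1)) y + σ/(t+1)²` wherever the
denominator is nonzero; if `σ > 0` and `b = 0` then `cm < 0 < cp` and (for `B ≥ 0`)
`y_t ≤ cm/(-a(t+1)(1-δ))` eventually; if `σ = 0` and `b = 0` then `cm = -1`, `cp = 0`. -/
theorem riccati_solution_and_decay (a b σ : ℝ) (ha : 0 < a) (hσ : 0 ≤ σ)
    (cm cp : ℝ)
    (hcm : cm ^ 2 + cm - b * cm = a * σ)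
    (hcp : cp ^ 2 + cp - b * cp = a * σ)
    (hlt : cm < cp)
    (B : ℝ) (y : ℝ → ℝ)
    (hy : ∀ t : ℝ, y t =
      (cm * (t + 1) ^ (-cm) + B * cp * (t + 1) ^ (-cp)) /
        (-a * ((t + 1) ^ (1 - cm) + B * (t + 1) ^ (1 - cp)))) :
    (∀ t : ℝ, 0 ≤ t → (t + 1) ^ (1 - cm) + B * (t + 1) ^ (1 - cp) ≠ 0 →
      HasDerivAt y (-a * y t ^ 2 - b / (t + 1) * y t + σ / (t + 1) ^ 2) t) ∧
    (0 < σ → b = 0 →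
      (cm < 0 ∧ 0 < cp) ∧
      (0 ≤ B → ∀ δ : ℝ, 0 < δ → δ < 1 →
        ∃ t₀ : ℝ, ∀ t, t₀ ≤ t → y t ≤ cm / (-a * (t + 1) * (1 - δ)))) ∧
    (σ = 0 → b = 0 → cm = -1 ∧ cp = 0) :=
  riccati_solution_and_decay_general a b σ ha cm cp hcm hcp hlt B y hy
end

section
/- Gronwall-type decay estimate (Lemma A.4 of the paper): fix α > 0, β ≥ 0, γ > 0 with γ ≠ α, M ≥ 0 and t₀ ≥ 0. Let x : [0,∞) → ℝ be continuously differentiable with x₀ ≥ 0, and let a, b : [0,∞) → ℝ satisfy dx/dt ≤ −a_t x_t + b_t for all t, where a_t ≥ −β for t < t₀, a_t ≥ α/(1+t) for t ≥ t₀, b_t ≤ M for t < t₀, and b_t ≤ M/(1+t)^{1+γ} for t ≥ t₀. Then there exists a constant K, depending only on α, β, γ and t₀ (but not on t, M or x₀), such that for all t ≥ 0: x_t ≤ K (x₀ + M)/(t+1)^{min{γ, α}}. -/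
/-!
The bound is nonnegative, so the differential inequality is only needed where `x > 0`; there
`-a x ≤ β x` before `t₀` and `-a x ≤ -α x / (1 + t)` after it. The integrating factors `e^{-βt}`
and `(1 + t)^α` turn these into `(e^{-βt} x)' ≤ M` and `((1 + t)^α x)' ≤ M (1 + t)^{α - γ - 1}`.
Since `a` and `b` need not be integrable, these are integrated by comparison with explicit
barriers, giving `x ≤ e^{βt₀} (1 + t₀) (x₀ + M)` on `[0, t₀]` and
`(1 + t)^α x_t ≤ (1 + t₀)^α x_{t₀} + M ((1 + t)^{α - γ} - (1 + t₀)^{α - γ}) / (α - γ)`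
afterwards. The last term is at most `M (1 + t)^{α - min γ α} / |α - γ|`, whence the decay rate
`min γ α`.
-/

open Real Set

theorem image_le_of_deriv_le_deriv_of_gt {f f' B B' : ℝ → ℝ} {a b : ℝ}
    (hf : ContinuousOn f (Icc a b)) (hf' : ∀ x ∈ Ico a b, HasDerivWithinAt f (f' x) (Ici x) x)
    (hB : ContinuousOn B (Icc a b)) (hB' : ∀ x ∈ Ico a b, HasDerivWithinAt B (B' x) (Ici x) x)
    (ha : f a ≤ B a) (bound : ∀ x ∈ Ico a b, B x < f x → f' x ≤ B' x) :
    ∀ ⦃x⦄, x ∈ Icc a b → f x ≤ B x := by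
  intro x hx
  refine le_of_forall_pos_le_add fun ε hε => ?_
  have hc : 0 < x - a + 1 := by linarith [hx.1]
  set δ := ε / (x - a + 1)
  have hδ : 0 < δ := div_pos hε hc
  -- Perturbing the barrier by `δ (y - a + 1)` makes the contact condition strict.
  have key := image_le_of_deriv_right_lt_deriv_boundary' hf hf'
    (B := fun y => B y + δ * (y - a + 1)) (B' := fun y => B' y + δ)
    (by simpa using ha.trans (le_add_of_nonneg_right hδ.le))
    (hB.add (by fun_prop))
    (fun y hy => (hB' y hy).add (by
      simpa using (((hasDerivAt_id y).sub_const a).add_const 1 |>.const_mul δ).hasDerivWithinAt))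
    (fun y hy hfy => by
      have : B y < f y := by rw [hfy]; nlinarith [hy.1]
      linarith [bound y hy this]) hx
  simpa [δ, div_mul_cancel₀ _ hc.ne'] using key

theorem mul_le_of_deriv_mul_le_of_pos {x x' φ φ' G G' : ℝ → ℝ} {s t : ℝ}
    (hx : ∀ r ∈ Icc s t, HasDerivAt x (x' r) r) (hφ : ∀ r ∈ Icc s t, HasDerivAt φ (φ' r) r)
    (hG : ∀ r ∈ Icc s t, HasDerivAt G (G' r) r) (hφ_pos : ∀ r ∈ Icc s t, 0 < φ r)
    (hG_nonneg : ∀ r ∈ Icc s t, 0 ≤ G r) (hs : φ s * x s ≤ G s)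
    (bound : ∀ r ∈ Ico s t, 0 < x r → φ' r * x r + φ r * x' r ≤ G' r) :
    ∀ r ∈ Icc s t, φ r * x r ≤ G r := by
  have hI : Ico s t ⊆ Icc s t := Ico_subset_Icc_self
  refine image_le_of_deriv_le_deriv_of_gt
    (fun r hr => ((hφ r hr).mul (hx r hr)).continuousAt.continuousWithinAt)
    (fun r hr => ((hφ r (hI hr)).mul (hx r (hI hr))).hasDerivWithinAt)
    (fun r hr => (hG r hr).continuousAt.continuousWithinAt)
    (fun r hr => (hG r (hI hr)).hasDerivWithinAt) hs fun r hr hlt => bound r hr ?_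
  exact pos_of_mul_pos_right ((hG_nonneg r (hI hr)).trans_lt hlt) (hφ_pos r (hI hr)).le

theorem rpow_sub_rpow_div_nonneg {u v : ℝ} (hu : 0 < u) (huv : u ≤ v) (p : ℝ) :
    0 ≤ (v ^ p - u ^ p) / p := by
  rcases le_total p 0 with hp | hp
  · exact div_nonneg_of_nonpos (sub_nonpos.2 (rpow_le_rpow_of_nonpos hu huv hp)) hp
  · exact div_nonneg (sub_nonneg.2 (rpow_le_rpow hu.le huv hp)) hp

theorem rpow_sub_rpow_div_le {u v p q : ℝ} (hu : 1 ≤ u) (huv : u ≤ v) (hq : 0 ≤ q)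
    (hpq : p ≤ q) :
    (v ^ p - u ^ p) / p ≤ v ^ q / |p| := by
  have hv : 1 ≤ v := hu.trans huv
  have hvq : 1 ≤ v ^ q := one_le_rpow hv hq
  rcases lt_trichotomy p 0 with hp | rfl | hp
  · rw [abs_of_neg hp, ← neg_div_neg_eq, neg_sub]
    have : u ^ p ≤ 1 := rpow_le_one_of_one_le_of_nonpos hu hp.le
    gcongr
    · linarith
    · linarith [rpow_nonneg (zero_le_one.trans hv) p]
  · simp
  · rw [abs_of_pos hp]
    gcongr
    linarith [rpow_nonneg (zero_le_one.trans hu) p, rpow_le_rpow_of_exponent_le hv hpq]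

theorem le_exp_mul_one_add_mul_of_deriv_le {x a b : ℝ → ℝ} {β M T : ℝ} (hx : Differentiable ℝ x)
    (hβ : 0 ≤ β) (hM : 0 ≤ M) (hx0 : 0 ≤ x 0)
    (hode : ∀ t ∈ Ico 0 T, deriv x t ≤ -a t * x t + b t) (ha : ∀ t ∈ Ico 0 T, -β ≤ a t)
    (hb : ∀ t ∈ Ico 0 T, b t ≤ M) (t : ℝ) (ht : t ∈ Icc 0 T) :
    x t ≤ exp (β * T) * (1 + T) * (x 0 + M) := by
  have hcmp := mul_le_of_deriv_mul_le_of_pos (x' := deriv x) (φ := fun r => exp (-β * r))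
    (φ' := fun r => -β * exp (-β * r)) (G := fun r => x 0 + M * r) (G' := fun _ => M)
    (fun r _ => (hx r).hasDerivAt)
    (fun r _ => by simpa [mul_comm] using ((hasDerivAt_id r).const_mul (-β)).exp)
    (fun r _ => by simpa using ((hasDerivAt_id r).const_mul M).const_add (x 0))
    (fun r _ => exp_pos _) (fun r hr => by have := hr.1; positivity) (by simp)
    (fun r hr hxr => by
      have he : exp (-β * r) ≤ 1 := exp_le_one_iff.2 (by nlinarith [hr.1])
      have h1 := mul_le_mul_of_nonneg_left (hode r hr) (exp_pos (-β * r)).le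
      have h2 : exp (-β * r) * ((-a r - β) * x r) ≤ 0 :=
        mul_nonpos_of_nonneg_of_nonpos (exp_pos _).le
          (mul_nonpos_of_nonpos_of_nonneg (by linarith [ha r hr]) hxr.le)
      have h3 := mul_le_mul_of_nonneg_left (hb r hr) (exp_pos (-β * r)).le
      linarith [mul_le_of_le_one_left hM he]) t ht
  have hbarrier : x 0 + M * t ≤ (1 + T) * (x 0 + M) := by nlinarith [ht.1, ht.2]
  calc x t = exp (β * t) * (exp (-β * t) * x t) := by
        rw [← mul_assoc, ← exp_add, show β * t + -β * t = 0 by ring, exp_zero, one_mul]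
    _ ≤ exp (β * t) * ((1 + T) * (x 0 + M)) :=
        mul_le_mul_of_nonneg_left (hcmp.trans hbarrier) (exp_pos _).le
    _ ≤ exp (β * T) * ((1 + T) * (x 0 + M)) :=
        mul_le_mul_of_nonneg_right (exp_le_exp.2 (by nlinarith [ht.2]))
          (mul_nonneg (by linarith [ht.1, ht.2]) (by linarith))
    _ = exp (β * T) * (1 + T) * (x 0 + M) := by ring

theorem one_add_rpow_mul_le_of_deriv_le {x a b : ℝ → ℝ} {α γ M T X : ℝ}
    (hx : Differentiable ℝ x) (hαγ : α ≠ γ) (hT : -1 < T) (hM : 0 ≤ M) (hX : 0 ≤ X)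
    (hxX : x T ≤ X) (hode : ∀ t, T ≤ t → deriv x t ≤ -a t * x t + b t)
    (ha : ∀ t, T ≤ t → α / (1 + t) ≤ a t) (hb : ∀ t, T ≤ t → b t ≤ M / (1 + t) ^ (1 + γ))
    (t : ℝ) (ht : T ≤ t) :
    (1 + t) ^ α * x t ≤
      (1 + T) ^ α * X + M * (((1 + t) ^ (α - γ) - (1 + T) ^ (α - γ)) / (α - γ)) := by
  have hT1 : 0 < 1 + T := by linarith
  have hpos : ∀ r ∈ Icc T t, 0 < 1 + r := fun r hr => by linarith [hr.1]
  have hbase : ∀ r : ℝ, HasDerivAt (fun r : ℝ => 1 + r) 1 r :=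
    fun r => (hasDerivAt_id r).const_add 1
  have hφ : ∀ r ∈ Icc T t, HasDerivAt (fun r => (1 + r) ^ α) (α * (1 + r) ^ (α - 1)) r :=
    fun r hr => by simpa using (hbase r).rpow_const (p := α) (Or.inl (hpos r hr).ne')
  have hG : ∀ r ∈ Icc T t, HasDerivAt
      (fun r => (1 + T) ^ α * X + M * (((1 + r) ^ (α - γ) - (1 + T) ^ (α - γ)) / (α - γ)))
      (M * (1 + r) ^ (α - γ - 1)) r := fun r hr => by
    have := (((hbase r).rpow_const (p := α - γ) (Or.inl (hpos r hr).ne')).sub_const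
      ((1 + T) ^ (α - γ))).div_const (α - γ) |>.const_mul M |>.const_add ((1 + T) ^ α * X)
    exact this.congr_deriv (by field_simp [sub_ne_zero.2 hαγ])
  refine mul_le_of_deriv_mul_le_of_pos (fun r _ => (hx r).hasDerivAt) hφ hG
    (fun r hr => rpow_pos_of_pos (hpos r hr) α)
    (fun r hr => add_nonneg (mul_nonneg (rpow_nonneg hT1.le _) hX)
      (mul_nonneg hM (rpow_sub_rpow_div_nonneg hT1 (by linarith [hr.1]) _)))
    (by simpa using mul_le_mul_of_nonneg_left hxX (rpow_nonneg hT1.le α))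
    (fun r hr hxr => ?_) t ⟨ht, le_rfl⟩
  have hr0 : 0 < 1 + r := hpos r (Ico_subset_Icc_self hr)
  have hq : 0 < (1 + r) ^ α := rpow_pos_of_pos hr0 α
  rw [rpow_sub_one hr0.ne', show α - γ - 1 = α - (1 + γ) by ring, rpow_sub hr0]
  have h2 : (1 + r) ^ α * ((α / (1 + r) - a r) * x r) ≤ 0 :=
    mul_nonpos_of_nonneg_of_nonpos hq.le
      (mul_nonpos_of_nonpos_of_nonneg (sub_nonpos.2 (ha r hr.1)) hxr.le)
  have h3 := mul_le_mul_of_nonneg_left (hb r hr.1) hq.le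
  calc α * ((1 + r) ^ α / (1 + r)) * x r + (1 + r) ^ α * deriv x r
      ≤ α * ((1 + r) ^ α / (1 + r)) * x r + (1 + r) ^ α * (-a r * x r + b r) := by
        gcongr; exact hode r hr.1
    _ = (1 + r) ^ α * ((α / (1 + r) - a r) * x r) + (1 + r) ^ α * b r := by ring
    _ ≤ (1 + r) ^ α * (M / (1 + r) ^ (1 + γ)) := by linarith
    _ = M * ((1 + r) ^ α / (1 + r) ^ (1 + γ)) := by ring

theorem le_div_one_add_rpow_min_of_deriv_le {x a b : ℝ → ℝ} {α γ M T X : ℝ}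
    (hx : Differentiable ℝ x) (hαγ : α ≠ γ) (hT : 0 ≤ T) (hM : 0 ≤ M) (hX : 0 ≤ X)
    (hxX : x T ≤ X) (hode : ∀ t, T ≤ t → deriv x t ≤ -a t * x t + b t)
    (ha : ∀ t, T ≤ t → α / (1 + t) ≤ a t) (hb : ∀ t, T ≤ t → b t ≤ M / (1 + t) ^ (1 + γ))
    (t : ℝ) (ht : T ≤ t) :
    x t ≤ ((1 + T) ^ α * X + M / |α - γ|) / (1 + t) ^ min γ α := by
  have hv : 1 ≤ 1 + t := by linarith
  have hv0 : 0 < 1 + t := by linarith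
  have hA : 0 ≤ (1 + T) ^ α * X := mul_nonneg (rpow_nonneg (by linarith) _) hX
  have hvq : 1 ≤ (1 + t) ^ (α - min γ α) := one_le_rpow hv (sub_nonneg.2 (min_le_right γ α))
  have hF := rpow_sub_rpow_div_le (u := 1 + T) (v := 1 + t) (by linarith) (by linarith)
    (sub_nonneg.2 (min_le_right γ α)) (sub_le_sub_left (min_le_left γ α) α)
  have hcmp := one_add_rpow_mul_le_of_deriv_le hx hαγ (by linarith) hM hX hxX hode ha hb t ht
  rw [le_div_iff₀ (rpow_pos_of_pos hv0 _)]
  refine le_of_mul_le_mul_right ?_ (zero_lt_one.trans_le hvq)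
  calc x t * (1 + t) ^ min γ α * (1 + t) ^ (α - min γ α) = (1 + t) ^ α * x t := by
        rw [mul_assoc, ← rpow_add hv0, add_sub_cancel, mul_comm]
    _ ≤ (1 + T) ^ α * X + M * ((1 + t) ^ (α - min γ α) / |α - γ|) :=
        hcmp.trans (by gcongr)
    _ ≤ (1 + T) ^ α * X * (1 + t) ^ (α - min γ α) + M * ((1 + t) ^ (α - min γ α) / |α - γ|) := by
        gcongr ?_ + _; exact le_mul_of_one_le_right hA hvq
    _ = ((1 + T) ^ α * X + M / |α - γ|) * (1 + t) ^ (α - min γ α) := by ring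

/-- **Gronwall-type decay estimate** (Lemma A.4 of the paper).
If `x' ≤ -a_t x + b_t` with `a_t ≥ -β` and `b_t ≤ M` before time `t₀`, and
`a_t ≥ α/(1+t)`, `b_t ≤ M/(1+t)^{1+γ}` after time `t₀`, then
`x_t ≤ K (x₀ + M)/(t+1)^{min{γ,α}}` for a constant `K` depending only on
`α, β, γ, t₀` (in particular not on `t`, `M`, or `x₀`). -/
theorem gronwall_type_decay (α β γ t₀ : ℝ)
    (hα : 0 < α) (hβ : 0 ≤ β) (hγ : 0 < γ) (hne : γ ≠ α) (ht₀ : 0 ≤ t₀) :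
    ∃ K : ℝ, ∀ M : ℝ, 0 ≤ M → ∀ x a b : ℝ → ℝ,
      ContDiff ℝ 1 x → 0 ≤ x 0 →
      (∀ t, 0 ≤ t → deriv x t ≤ -a t * x t + b t) →
      (∀ t, 0 ≤ t → t < t₀ → -β ≤ a t) →
      (∀ t, t₀ ≤ t → α / (1 + t) ≤ a t) →
      (∀ t, 0 ≤ t → t < t₀ → b t ≤ M) →
      (∀ t, t₀ ≤ t → b t ≤ M / (1 + t) ^ (1 + γ)) →
      ∀ t, 0 ≤ t → x t ≤ K * (x 0 + M) / (t + 1) ^ min γ α := by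
  refine ⟨exp (β * t₀) * (1 + t₀) ^ (α + 1) + |α - γ|⁻¹, ?_⟩
  intro M hM x a b hx hx0 hode ha₁ ha₂ hb₁ hb₂ t ht
  have hxd : Differentiable ℝ x := hx.differentiable one_ne_zero
  have hP : 0 ≤ exp (β * t₀) * (1 + t₀) * (x 0 + M) := by positivity
  have early : ∀ s ∈ Icc 0 t₀, x s ≤ exp (β * t₀) * (1 + t₀) * (x 0 + M) :=
    le_exp_mul_one_add_mul_of_deriv_le hxd hβ hM hx0 (fun r hr => hode r hr.1)
      (fun r hr => ha₁ r hr.1 hr.2) (fun r hr => hb₁ r hr.1 hr.2)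
  have bound : x t ≤ ((1 + t₀) ^ α * (exp (β * t₀) * (1 + t₀) * (x 0 + M)) + M / |α - γ|) /
      (1 + t) ^ min γ α := by
    rcases le_total t t₀ with h | h
    · rw [le_div_iff₀ (rpow_pos_of_pos (by linarith) _)]
      have hm : (1 + t) ^ min γ α ≤ (1 + t₀) ^ α :=
        (rpow_le_rpow (by linarith) (by linarith) (le_min hγ.le hα.le)).trans
          (rpow_le_rpow_of_exponent_le (by linarith) (min_le_right γ α))
      have hxt := mul_le_mul (early t ⟨ht, h⟩) hm (rpow_nonneg (by linarith) _) hP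
      have hMγ := div_nonneg hM (abs_nonneg (α - γ))
      linarith
    · exact le_div_one_add_rpow_min_of_deriv_le hxd hne.symm ht₀ hM hP (early t₀ ⟨ht₀, le_rfl⟩)
        (fun r hr => hode r (ht₀.trans hr)) ha₂ hb₂ t h
  rw [add_comm t 1]
  refine bound.trans (div_le_div_of_nonneg_right ?_ (rpow_nonneg (by linarith) _))
  rw [rpow_add_one (by linarith), div_eq_mul_inv]
  have hMγ := mul_le_mul_of_nonneg_right (le_add_of_nonneg_left hx0 : M ≤ x 0 + M)
    (inv_nonneg.2 (abs_nonneg (α - γ)))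
  linarith
end

section
/- Existence of localized weight vectors (Lemma A.5 of the paper): let φ ∈ ℝ^{d × d} be a symmetric matrix with nonnegative entries and zero diagonal, and suppose there is φ₀ with 0 < φ₀ < 1 such that Σ_{j=1}^d φ_{i,j} ≤ 1 − φ₀ for all i. Then for every index i ∈ {1,…,d} there exists a vector v^i ∈ ℝ^d with the following three properties: (1) v^i_j ≥ 0 for all j, and v^i_i ≥ φ₀; (2) for every index j, Σ_{l ≠ j} φ_{j,l} v^i_l ≤ v^i_j; (3) Σ_{j=1}^d v^i_j ≤ 1. -/
/-!
Take `vⱼ = φ₀ Gⱼᵢ`, where `G = ∑ₙ φⁿ` is the Green matrix of the killed chain. Row sums of `φⁿ`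
are at most `(1 - φ₀)ⁿ`, so the series converges and the row sums of `G` are at most `1 / φ₀`;
by symmetry so are its column sums, which gives (3). The renewal identity `G = 1 + φ G` between
nonnegative matrices gives both `Gᵢᵢ ≥ 1` and `(φ G)ⱼᵢ ≤ Gⱼᵢ`, i.e. (1) and (2).
-/

open Matrix Finset

theorem tsum_pow_eq_one_add_mul_tsum_pow {R : Type*} [Ring R] [TopologicalSpace R]
    [IsTopologicalRing R] [T2Space R] {x : R} (hx : Summable fun n : ℕ ↦ x ^ n) :
    ∑' n : ℕ, x ^ n = 1 + x * ∑' n : ℕ, x ^ n := by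
  nth_rw 1 [hx.tsum_eq_zero_add]
  rw [pow_zero, ← hx.tsum_mul_left]
  simp only [pow_succ']

namespace Matrix

variable {ι : Type*} [Fintype ι] [DecidableEq ι] {A : Matrix ι ι ℝ}

theorem sum_pow_apply_le {r : ℝ} (hA : ∀ i j, 0 ≤ A i j) (hr : 0 ≤ r)
    (hrow : ∀ i, ∑ j, A i j ≤ r) (n : ℕ) (i : ι) : ∑ j, (A ^ n) i j ≤ r ^ n := by
  induction n with
  | zero => simp [one_apply]
  | succ n ih =>
    calc ∑ j, (A ^ (n + 1)) i j = ∑ k, (A ^ n) i k * ∑ j, A k j := by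
          simp only [pow_succ, mul_apply, mul_sum]
          exact sum_comm
      _ ≤ ∑ k, (A ^ n) i k * r :=
          sum_le_sum fun k _ ↦ mul_le_mul_of_nonneg_left (hrow k) (pow_apply_nonneg hA n i k)
      _ = (∑ k, (A ^ n) i k) * r := by rw [sum_mul]
      _ ≤ r ^ n * r := mul_le_mul_of_nonneg_right ih hr
      _ = r ^ (n + 1) := (pow_succ r n).symm

theorem summable_pow_apply {r : ℝ} (hA : ∀ i j, 0 ≤ A i j) (hr₀ : 0 ≤ r) (hr₁ : r < 1)
    (hrow : ∀ i, ∑ j, A i j ≤ r) (i j : ι) : Summable fun n : ℕ ↦ (A ^ n) i j :=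
  (summable_geometric_of_lt_one hr₀ hr₁).of_nonneg_of_le (fun n ↦ pow_apply_nonneg hA n i j)
    fun n ↦ (single_le_sum (fun k _ ↦ pow_apply_nonneg hA n i k) (mem_univ j)).trans
      (sum_pow_apply_le hA hr₀ hrow n i)

theorem summable_pow {r : ℝ} (hA : ∀ i j, 0 ≤ A i j) (hr₀ : 0 ≤ r) (hr₁ : r < 1)
    (hrow : ∀ i, ∑ j, A i j ≤ r) : Summable fun n : ℕ ↦ A ^ n :=
  Pi.summable.2 fun i ↦ Pi.summable.2 (summable_pow_apply hA hr₀ hr₁ hrow i)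

theorem tsum_pow_apply (h : Summable fun n : ℕ ↦ A ^ n) (i j : ι) :
    (∑' n : ℕ, A ^ n) i j = ∑' n : ℕ, (A ^ n) i j := by
  have hi : (∑' n : ℕ, A ^ n) i = ∑' n : ℕ, (A ^ n) i := tsum_apply (X := fun _ ↦ ι → ℝ) h
  rw [hi, tsum_apply (Pi.summable.1 h i)]

theorem tsum_pow_apply_nonneg (hA : ∀ i j, 0 ≤ A i j) (h : Summable fun n : ℕ ↦ A ^ n)
    (i j : ι) : 0 ≤ (∑' n : ℕ, A ^ n) i j := by
  rw [tsum_pow_apply h]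
  exact tsum_nonneg fun n ↦ pow_apply_nonneg hA n i j

theorem sum_tsum_pow_apply_le {r : ℝ} (hA : ∀ i j, 0 ≤ A i j) (hr₀ : 0 ≤ r) (hr₁ : r < 1)
    (hrow : ∀ i, ∑ j, A i j ≤ r) (i : ι) : ∑ j, (∑' n : ℕ, A ^ n) i j ≤ (1 - r)⁻¹ := by
  have hs := summable_pow_apply hA hr₀ hr₁ hrow i
  calc ∑ j, (∑' n : ℕ, A ^ n) i j = ∑' n : ℕ, ∑ j, (A ^ n) i j := by
        simp only [tsum_pow_apply (summable_pow hA hr₀ hr₁ hrow)]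
        exact (Summable.tsum_finsetSum fun j _ ↦ hs j).symm
    _ ≤ ∑' n : ℕ, r ^ n :=
        Summable.tsum_le_tsum (sum_pow_apply_le hA hr₀ hrow · i) (summable_sum fun j _ ↦ hs j)
          (summable_geometric_of_lt_one hr₀ hr₁)
    _ = (1 - r)⁻¹ := tsum_geometric_of_lt_one hr₀ hr₁

theorem IsSymm.tsum_pow (hA : A.IsSymm) : (∑' n : ℕ, A ^ n).IsSymm :=
  transpose_tsum.trans (tsum_congr fun n ↦ hA.pow n)

theorem tsum_pow_apply_eq_one_apply_add (h : Summable fun n : ℕ ↦ A ^ n) (i j : ι) :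
    (∑' n : ℕ, A ^ n) i j = (1 : Matrix ι ι ℝ) i j + (A * ∑' n : ℕ, A ^ n) i j := by
  conv_lhs => rw [tsum_pow_eq_one_add_mul_tsum_pow h]
  rfl

theorem one_le_tsum_pow_apply_self (hA : ∀ i j, 0 ≤ A i j) (h : Summable fun n : ℕ ↦ A ^ n)
    (i : ι) : 1 ≤ (∑' n : ℕ, A ^ n) i i := by
  have hAG : 0 ≤ (A * ∑' n : ℕ, A ^ n) i i :=
    sum_nonneg fun k _ ↦ mul_nonneg (hA i k) (tsum_pow_apply_nonneg hA h k i)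
  rw [tsum_pow_apply_eq_one_apply_add h, one_apply_eq]
  linarith

theorem mul_tsum_pow_apply_le (h : Summable fun n : ℕ ↦ A ^ n) (i j : ι) :
    (A * ∑' n : ℕ, A ^ n) i j ≤ (∑' n : ℕ, A ^ n) i j := by
  rw [tsum_pow_apply_eq_one_apply_add h i j, le_add_iff_nonneg_left, one_apply]
  positivity

end Matrix

theorem exists_localized_weight_vectors_general {d : ℕ}
    (φ : Matrix (Fin d) (Fin d) ℝ) (hsymm : φ.IsSymm)
    (hnn : ∀ i j, 0 ≤ φ i j) (hdiag : ∀ i, φ i i = 0)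
    (φ₀ : ℝ) (hφ₀ : 0 < φ₀)
    (hrow : ∀ i, ∑ j, φ i j ≤ 1 - φ₀) :
    ∀ i : Fin d, ∃ v : Fin d → ℝ,
      (∀ j, 0 ≤ v j) ∧ φ₀ ≤ v i ∧
      (∀ j, ∑ l ∈ Finset.univ.erase j, φ j l * v l ≤ v j) ∧
      ∑ j, v j ≤ 1 := by
  intro i
  have hr₀ : 0 ≤ 1 - φ₀ := (sum_nonneg fun j _ ↦ hnn i j).trans (hrow i)
  have hr₁ : 1 - φ₀ < 1 := by linarith
  have hG := summable_pow hnn hr₀ hr₁ hrow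
  set G := ∑' n : ℕ, φ ^ n
  refine ⟨fun j ↦ φ₀ * G j i, fun j ↦ mul_nonneg hφ₀.le (tsum_pow_apply_nonneg hnn hG j i),
    le_mul_of_one_le_right hφ₀.le (one_le_tsum_pow_apply_self hnn hG i), fun j ↦ ?_, ?_⟩
  · calc ∑ l ∈ univ.erase j, φ j l * (φ₀ * G l i) = φ₀ * (φ * G) j i := by
          rw [sum_erase _ (by simp [hdiag j]), mul_apply, mul_sum]
          exact sum_congr rfl fun l _ ↦ by ring
      _ ≤ φ₀ * G j i := mul_le_mul_of_nonneg_left (mul_tsum_pow_apply_le hG j i) hφ₀.le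
  · calc ∑ j, φ₀ * G j i = φ₀ * ∑ j, G i j := by
          rw [mul_sum]
          exact sum_congr rfl fun j _ ↦ congrArg (φ₀ * ·) (hsymm.tsum_pow.apply i j)
      _ ≤ φ₀ * (1 - (1 - φ₀))⁻¹ :=
          mul_le_mul_of_nonneg_left (sum_tsum_pow_apply_le hnn hr₀ hr₁ hrow i) hφ₀.le
      _ = 1 := by rw [sub_sub_cancel, mul_inv_cancel₀ hφ₀.ne']

/-- **Existence of localized weight vectors** (Lemma A.5 of the paper).
For a symmetric matrix `φ` with nonnegative entries, zero diagonal and row sums at most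
`1 - φ₀`, for every index `i` there is a nonnegative weight vector `v` with `v_i ≥ φ₀`,
`Σ_{l ≠ j} φ_{j,l} v_l ≤ v_j` for every `j`, and total mass `Σ_j v_j ≤ 1`. -/
theorem exists_localized_weight_vectors {d : ℕ}
    (φ : Matrix (Fin d) (Fin d) ℝ) (hsymm : φ.IsSymm)
    (hnn : ∀ i j, 0 ≤ φ i j) (hdiag : ∀ i, φ i i = 0)
    (φ₀ : ℝ) (hφ₀ : 0 < φ₀) (hφ₀' : φ₀ < 1)
    (hrow : ∀ i, ∑ j, φ i j ≤ 1 - φ₀) :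
    ∀ i : Fin d, ∃ v : Fin d → ℝ,
      (∀ j, 0 ≤ v j) ∧ φ₀ ≤ v i ∧
      (∀ j, ∑ l ∈ Finset.univ.erase j, φ j l * v l ≤ v j) ∧
      ∑ j, v j ≤ 1 :=
  exists_localized_weight_vectors_general φ hsymm hnn hdiag φ₀ hφ₀ hrow
end
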